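/- arXiv:2401.00418 — 6 statements merged into one kernel-verified Lean document; each statement's English description precedes it below -/
import Mathlib

section
/- For every prime power q, every integer k ≥ 2, and every integer r ≥ 1, there exists a constant d₀ (depending on q, k, r) such that for all integers d ≥ d₀ one has n_q(k,d,r) = g_q(k,d); that is, the smallest length of a linear [n,k,d]_q-code with locality r equals the Griesmer bound. -/
open scoped Classical

/-- The Hamming weight of a vector: the number of nonzero coordinates. -/
noncomputable def hamWt {F : Type} [Field F] {n : ℕ} (c : Fin n → F) : ℕ :=
  (Finset.univ.filter fun i => c i ≠ 0).card

/-- `C` is a linear `[n,k,d]` code over `F`: a `k`-dimensional subspace of `F^n`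
in which every nonzero codeword has Hamming weight at least `d`. -/
def IsCode {F : Type} [Field F] {n : ℕ} (k d : ℕ) (C : Submodule F (Fin n → F)) : Prop :=
  Module.finrank F ↥C = k ∧ ∀ c ∈ C, c ≠ 0 → d ≤ hamWt c

/-- `C ⊆ F^n` has locality `r`: every coordinate `i` has a recovery set `S` of at most `r`
other coordinates such that any two codewords agreeing on `S` agree at `i`. -/
def HasLocality {F : Type} [Field F] {n : ℕ} (C : Submodule F (Fin n → F)) (r : ℕ) : Prop :=
  ∀ i : Fin n, ∃ S : Finset (Fin n), i ∉ S ∧ S.card ≤ r ∧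
    ∀ c ∈ C, ∀ c' ∈ C, (∀ j ∈ S, c j = c' j) → c i = c' i

/-- There exists a linear `[n,k,d]_q` code (over some field with `q` elements). -/
def CodeExists (q n k d : ℕ) : Prop :=
  ∃ (F : Type) (_ : Field F), Nat.card F = q ∧
    ∃ C : Submodule F (Fin n → F), IsCode k d C

/-- There exists a linear `[n,k,d]_q` code with locality `r`. -/
def LRCExists (q n k d r : ℕ) : Prop :=
  ∃ (F : Type) (_ : Field F), Nat.card F = q ∧
    ∃ C : Submodule F (Fin n → F), IsCode k d C ∧ HasLocality C r

/-- `n_q(k,d)`: the smallest length of a linear `[n,k,d]_q` code. -/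
noncomputable def nCode (q k d : ℕ) : ℕ := sInf {n | CodeExists q n k d}

/-- `n_q(k,d,r)`: the smallest length of a linear `[n,k,d]_q` code with locality `r`. -/
noncomputable def nLRC (q k d r : ℕ) : ℕ := sInf {n | LRCExists q n k d r}

/-- There exists an `[n,k]_q` code with locality `r` (no condition on minimum distance). -/
def LRCExistsNoDist (q n k r : ℕ) : Prop :=
  ∃ (F : Type) (_ : Field F), Nat.card F = q ∧
    ∃ C : Submodule F (Fin n → F), Module.finrank F ↥C = k ∧ HasLocality C r

/-- `n'_q(k,r)`: the smallest length of an `[n,k]_q` code with locality `r`. -/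
noncomputable def nLRCNoDist (q k r : ℕ) : ℕ := sInf {n | LRCExistsNoDist q n k r}

/-- The dual code of `C`. -/
def dualCode {F : Type} [Field F] {n : ℕ} (C : Submodule F (Fin n → F)) : Set (Fin n → F) :=
  {x | ∀ c ∈ C, ∑ j, x j * c j = 0}

/-- `C` is projective: non-degenerate and no two coordinates are proportional. -/
def IsProjective {F : Type} [Field F] {n : ℕ} (C : Submodule F (Fin n → F)) : Prop :=
  (∀ i : Fin n, ∃ c ∈ C, c i ≠ 0) ∧
    (∀ i j : Fin n, i ≠ j → ∀ lam : F, lam ≠ 0 → ∃ c ∈ C, c i ≠ lam * c j)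

/-- The Griesmer bound `g_q(k,d) = ∑_{i=0}^{k-1} ⌈d/q^i⌉`. -/
noncomputable def griesmer (q k d : ℕ) : ℕ :=
  ∑ i ∈ Finset.range k, ⌈(d : ℚ) / (q : ℚ) ^ i⌉₊

/-!
The lower bound is the Griesmer bound, which holds for every linear code: restricting a code to
the zero set of a minimum-weight codeword `c₀` (of weight `w`) kills exactly the multiples of `c₀`,
and by pigeonhole every other codeword agrees with some multiple of `c₀` on at least `⌈w/q⌉`
coordinates of its support, so the residual code has dimension `k - 1` and minimum distance at
least `⌈w/q⌉`; induct on `k`.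

The upper bound is Belov's construction. Write `d = s q^(k-1) - e` with `0 ≤ e < q^(k-1)` and
`e = ∑ aᵢ qⁱ` in base `q`, and fix subspaces `Uᵢ` of dimension `i + 1`. Take the generator
matrix whose columns are the points of `ℙ(F^k)`, point `p` repeated `s - ∑_{p ∈ Uᵢ} aᵢ` times. A
nonzero functional is nonzero on `q^(k-1)` points, of which at most `qⁱ` lie in `Uᵢ`, so every
nonzero codeword has weight at least `s q^(k-1) - e = d`, and the length is exactly `g_q(k,d)`.
For `d ≥ ((k-1)(q-1) + 2) q^(k-1)` every multiplicity is at least `2`, so every coordinate is a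
copy of another one, which is locality `1`.
-/

open Finset
open scoped LinearAlgebra.Projectivization

lemma natCeil_div_le_iff {a b x : ℕ} (hb : 0 < b) : ⌈(a / b : ℚ)⌉₊ ≤ x ↔ a ≤ b * x := by
  rw [Nat.ceil_le, div_le_iff₀ (by exact_mod_cast hb)]
  exact_mod_cast (by rw [mul_comm] : a ≤ x * b ↔ a ≤ b * x)

lemma natCeil_div_eq_sub_div {b d e M : ℕ} (hb : 0 < b) (h : d + e = b * M) :
    ⌈(d / b : ℚ)⌉₊ = M - e / b := by
  refine eq_of_forall_ge_iff fun x => ?_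
  rw [natCeil_div_le_iff hb, tsub_le_iff_right, ← tsub_le_iff_left, Nat.le_div_iff_mul_le hb,
    Nat.sub_mul, mul_comm M, mul_comm x]
  omega

lemma natCeil_div_div {a b c : ℕ} (hb : 0 < b) (hc : 0 < c) :
    ⌈((⌈(a / b : ℚ)⌉₊ : ℕ) / c : ℚ)⌉₊ = ⌈(a / (b * c : ℕ) : ℚ)⌉₊ :=
  eq_of_forall_ge_iff fun x => by
    rw [natCeil_div_le_iff hc, natCeil_div_le_iff hb, natCeil_div_le_iff (Nat.mul_pos hb hc),
      mul_assoc]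

lemma exists_add_eq_mul {b : ℕ} (hb : 0 < b) (d : ℕ) : ∃ s e, d + e = s * b ∧ e < b := by
  have h1 := Nat.div_add_mod (d + b - 1) b
  have h2 := Nat.mod_lt (d + b - 1) hb
  refine ⟨(d + b - 1) / b, b - 1 - (d + b - 1) % b, ?_, by omega⟩
  rw [mul_comm]
  omega

lemma griesmer_mono {q k d d' : ℕ} (h : d ≤ d') : griesmer q k d ≤ griesmer q k d' :=
  sum_le_sum fun i _ => Nat.ceil_mono (div_le_div_of_nonneg_right (by exact_mod_cast h)
    (by positivity))

lemma griesmer_succ {q k d : ℕ} (hq : 0 < q) :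
    griesmer q (k + 1) d = d + griesmer q k ⌈(d / q : ℚ)⌉₊ := by
  simp only [griesmer, sum_range_succ', pow_zero, div_one, Nat.ceil_natCast]
  rw [add_comm]
  congr 1
  refine sum_congr rfl fun i _ => ?_
  have hceil := natCeil_div_div (a := d) hq (pow_pos hq i)
  push_cast at hceil
  rw [hceil, pow_succ']

lemma sum_digit_mul_pow (q : ℕ) (m x : ℕ) :
    ∑ i ∈ range m, x / q ^ i % q * q ^ i = x % q ^ m := by
  induction m with
  | zero => simp [Nat.mod_one]
  | succ m ih => rw [sum_range_succ, ih, Nat.mod_pow_succ]; ring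

lemma sum_div_pow_eq_sum_digit_mul_geom (q m : ℕ) {e : ℕ} (he : e < q ^ m) :
    ∑ t ∈ range (m + 1), e / q ^ t =
      ∑ i ∈ range m, e / q ^ i % q * ∑ j ∈ range (i + 1), q ^ j := by
  induction m generalizing e with
  | zero => simp_all
  | succ m ih =>
    have hdiv : e / q < q ^ m := Nat.div_lt_of_lt_mul (by rwa [← pow_succ'])
    have hdigits := sum_digit_mul_pow q (m + 1) e
    rw [Nat.mod_eq_of_lt he] at hdigits
    have hshift : ∀ i, e / q ^ (i + 1) = e / q / q ^ i := fun i => by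
      rw [Nat.div_div_eq_div_mul, pow_succ']
    calc ∑ t ∈ range (m + 1 + 1), e / q ^ t
        = ∑ t ∈ range (m + 1), e / q / q ^ t + e := by
          simp only [sum_range_succ' _ (m + 1), hshift, pow_zero, Nat.div_one]
      _ = ∑ i ∈ range m, e / q ^ (i + 1) % q * ∑ j ∈ range (i + 1), q ^ j + e := by
          simp only [ih hdiv, hshift]
      _ = ∑ i ∈ range (m + 1), e / q ^ i % q * ∑ j ∈ range i, q ^ j
            + ∑ i ∈ range (m + 1), e / q ^ i % q * q ^ i := by
          rw [hdigits, sum_range_succ' _ m]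
          simp
      _ = _ := by
          rw [← sum_add_distrib]
          exact sum_congr rfl fun i _ => by rw [sum_range_succ, mul_add]

lemma griesmer_add_sum_digit_mul_geom {q k d e s : ℕ} (hq : 0 < q) (he : e < q ^ (k - 1))
    (hde : d + e = s * q ^ (k - 1)) :
    griesmer q k d + ∑ i ∈ range (k - 1), e / q ^ i % q * ∑ j ∈ range (i + 1), q ^ j =
      s * ∑ j ∈ range k, q ^ j := by
  cases k with
  | zero => simp [griesmer]
  | succ k =>
    rw [Nat.add_sub_cancel] at he hde ⊢
    rw [← sum_div_pow_eq_sum_digit_mul_geom q k he, griesmer, ← sum_add_distrib, mul_sum,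
      ← sum_range_reflect (fun j => s * q ^ j)]
    refine sum_congr rfl fun t ht => ?_
    have hsplit : d + e = q ^ t * (s * q ^ (k - t)) := by
      rw [hde, mul_left_comm, ← pow_add]
      congr 2
      rw [mem_range] at ht
      omega
    have hceil := natCeil_div_eq_sub_div (pow_pos hq t) hsplit
    push_cast at hceil
    rw [hceil, Nat.sub_add_cancel (Nat.div_le_of_le_mul (hsplit ▸ Nat.le_add_left e d)),
      Nat.add_sub_cancel]

section Residual

variable {F ι : Type*} [Field F]

def residualMap (c0 : ι → F) : (ι → F) →ₗ[F] ({i // c0 i = 0} → F) :=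
  LinearMap.funLeft F F Subtype.val

lemma residualMap_self (c0 : ι → F) : residualMap c0 c0 = 0 :=
  funext fun i => i.2

lemma residualMap_eq_zero_of_mem_span {c0 y : ι → F} (hy : y ∈ F ∙ c0) :
    residualMap c0 y = 0 := by
  obtain ⟨a, rfl⟩ := Submodule.mem_span_singleton.1 hy
  rw [map_smul, residualMap_self, smul_zero]

variable [Fintype ι]

lemma exists_le_card_mul_card_agree [Fintype F] (c0 y : ι → F) :
    ∃ α : F, hammingNorm c0 ≤ Fintype.card F * #{i | c0 i ≠ 0 ∧ y i = α * c0 i} := by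
  have hfib : hammingNorm c0 = ∑ α : F, #{i | c0 i ≠ 0 ∧ y i = α * c0 i} := by
    rw [hammingNorm, card_eq_sum_card_fiberwise (f := fun i => y i / c0 i) (t := univ)
      (fun _ _ => mem_coe.2 (mem_univ _))]
    refine sum_congr rfl fun α _ => congrArg card ?_
    ext i
    simp only [mem_filter, mem_univ, true_and]
    exact and_congr_right fun h => div_eq_iff h
  obtain ⟨α, -, hα⟩ := exists_le_of_sum_le (s := univ) univ_nonempty
    (f := fun _ => hammingNorm c0)
    (g := fun α => Fintype.card F * #{i | c0 i ≠ 0 ∧ y i = α * c0 i})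
    (by rw [← mul_sum, ← hfib, sum_const, card_univ, smul_eq_mul])
  exact ⟨α, hα⟩

lemma hammingNorm_sub_smul_add_card_agree (c0 y : ι → F) (α : F) :
    hammingNorm (y - α • c0) + #{i | c0 i ≠ 0 ∧ y i = α * c0 i} =
      hammingNorm c0 + #{i | c0 i = 0 ∧ y i ≠ 0} := by
  simp only [hammingNorm, card_filter, ← sum_add_distrib]
  refine sum_congr rfl fun i _ => ?_
  by_cases h : c0 i = 0 <;> by_cases h' : y i = α * c0 i <;> simp [h, h', sub_eq_zero]

lemma mem_span_or_le_card_of_minimal [Fintype F] {C : Submodule F (ι → F)} {c0 : ι → F}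
    (hc0 : c0 ∈ C) (hmin : ∀ c ∈ C, c ≠ 0 → hammingNorm c0 ≤ hammingNorm c) {y : ι → F}
    (hy : y ∈ C) :
    y ∈ F ∙ c0 ∨ ⌈(hammingNorm c0 / Fintype.card F : ℚ)⌉₊ ≤ #{i | c0 i = 0 ∧ y i ≠ 0} := by
  obtain ⟨α, hα⟩ := exists_le_card_mul_card_agree c0 y
  by_cases hz : y - α • c0 = 0
  · exact .inl (Submodule.mem_span_singleton.2 ⟨α, (sub_eq_zero.1 hz).symm⟩)
  · have hw := hmin _ (C.sub_mem hy (C.smul_mem α hc0)) hz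
    have hsplit := hammingNorm_sub_smul_add_card_agree c0 y α
    refine .inr ((natCeil_div_le_iff Fintype.card_pos).2 (hα.trans ?_))
    exact Nat.mul_le_mul_left _ (by omega)

lemma hammingNorm_residualMap (c0 y : ι → F) :
    hammingNorm (residualMap c0 y) = #{i | c0 i = 0 ∧ y i ≠ 0} := by
  rw [← filter_filter, card_filter, sum_subtype (p := fun i => c0 i = 0) _ (fun i => by simp),
    hammingNorm, card_filter]
  rfl

lemma card_eq_hammingNorm_add_card_residual (c0 : ι → F) :
    Fintype.card ι = hammingNorm c0 + Fintype.card {i // c0 i = 0} := by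
  rw [hammingNorm, Fintype.card_subtype, add_comm, card_filter_add_card_filter_not, card_univ]

variable [Fintype F] {C : Submodule F (ι → F)} {c0 : ι → F}

lemma le_hammingNorm_of_mem_map_residualMap (hc0 : c0 ∈ C)
    (hmin : ∀ c ∈ C, c ≠ 0 → hammingNorm c0 ≤ hammingNorm c) {c : {i // c0 i = 0} → F}
    (hc : c ∈ C.map (residualMap c0)) (hc0' : c ≠ 0) :
    ⌈(hammingNorm c0 / Fintype.card F : ℚ)⌉₊ ≤ hammingNorm c := by
  obtain ⟨y, hy, rfl⟩ := hc
  rcases mem_span_or_le_card_of_minimal hc0 hmin hy with h | h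
  · exact absurd (residualMap_eq_zero_of_mem_span h) hc0'
  · rwa [hammingNorm_residualMap]

lemma mem_span_of_residualMap_eq_zero (hc0 : c0 ∈ C) (hc00 : c0 ≠ 0)
    (hmin : ∀ c ∈ C, c ≠ 0 → hammingNorm c0 ≤ hammingNorm c) {y : ι → F} (hy : y ∈ C)
    (h : residualMap c0 y = 0) : y ∈ F ∙ c0 := by
  refine (mem_span_or_le_card_of_minimal hc0 hmin hy).resolve_right fun hle => ?_
  have hpos : 0 < ⌈(hammingNorm c0 / Fintype.card F : ℚ)⌉₊ :=
    Nat.ceil_pos.2 (div_pos (by exact_mod_cast hammingNorm_pos_iff.2 hc00)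
      (by exact_mod_cast Fintype.card_pos))
  rw [← hammingNorm_residualMap, h, hammingNorm_zero] at hle
  omega

lemma finrank_map_residualMap_add_one (hc0 : c0 ∈ C) (hc00 : c0 ≠ 0)
    (hmin : ∀ c ∈ C, c ≠ 0 → hammingNorm c0 ≤ hammingNorm c) :
    Module.finrank F (C.map (residualMap c0)) + 1 = Module.finrank F C := by
  let φ := (residualMap c0).comp C.subtype
  have hker : LinearMap.ker φ = F ∙ (⟨c0, hc0⟩ : C) := by
    ext x
    rw [LinearMap.mem_ker, Submodule.mem_span_singleton]
    constructor
    · intro hx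
      obtain ⟨a, ha⟩ :=
        Submodule.mem_span_singleton.1 (mem_span_of_residualMap_eq_zero hc0 hc00 hmin x.2 hx)
      exact ⟨a, Subtype.ext ha⟩
    · rintro ⟨a, rfl⟩
      exact residualMap_eq_zero_of_mem_span
        (Submodule.smul_mem _ a (Submodule.mem_span_singleton_self c0))
  have hrange : LinearMap.range φ = C.map (residualMap c0) := by
    rw [LinearMap.range_comp, Submodule.range_subtype]
  have := φ.finrank_range_add_finrank_ker
  rwa [hker, finrank_span_singleton (by simpa using hc00), hrange] at this

end Residual

theorem griesmer_le_card {F ι : Type*} [Field F] [Fintype F] [Fintype ι]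
    (C : Submodule F (ι → F)) {k d : ℕ} (hk : Module.finrank F C = k)
    (hd : ∀ c ∈ C, c ≠ 0 → d ≤ hammingNorm c) :
    griesmer (Fintype.card F) k d ≤ Fintype.card ι := by
  induction k generalizing ι d with
  | zero => simp [griesmer]
  | succ k ih =>
    have hC : C ≠ ⊥ := fun h => by rw [← Submodule.finrank_eq_zero] at h; omega
    obtain ⟨c0, ⟨hc0, hc00⟩, hmin⟩ := Set.exists_min_image {c | c ∈ C ∧ c ≠ 0} hammingNorm
      (Set.toFinite _) (Submodule.exists_mem_ne_zero_of_ne_bot hC)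
    have hmin' : ∀ c ∈ C, c ≠ 0 → hammingNorm c0 ≤ hammingNorm c :=
      fun c hc hc' => hmin c ⟨hc, hc'⟩
    have hres := ih (C.map (residualMap c0))
      (by have := finrank_map_residualMap_add_one hc0 hc00 hmin'; omega)
      (fun c hc hc' => le_hammingNorm_of_mem_map_residualMap hc0 hmin' hc hc')
    calc griesmer (Fintype.card F) (k + 1) d
        ≤ griesmer (Fintype.card F) (k + 1) (hammingNorm c0) :=
          griesmer_mono (hd c0 hc0 hc00)
      _ = hammingNorm c0 + griesmer (Fintype.card F) k
            ⌈(hammingNorm c0 / Fintype.card F : ℚ)⌉₊ := griesmer_succ Fintype.card_pos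
      _ ≤ Fintype.card ι := by
          rw [card_eq_hammingNorm_add_card_residual c0]
          exact Nat.add_le_add_left hres _

lemma card_sub_one_pos (F : Type*) [Field F] [Fintype F] : 0 < Fintype.card F - 1 := by
  have := Fintype.one_lt_card (α := F)
  omega

section ProjectiveCounting

variable {F V : Type*} [Field F] [AddCommGroup V] [Module F V] [Fintype V]

noncomputable instance : Fintype (ℙ F V) := Fintype.ofFinite _

lemma card_filter_mem_and (W : Submodule F V) (Q : V → Prop) [DecidablePred Q] :
    #{v | v ∈ W ∧ Q v} = #{w : W | Q w} := by
  rw [← Fintype.card_subtype, ← Fintype.card_subtype]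
  exact Fintype.card_congr (Equiv.subtypeSubtypeEquivSubtypeInter _ _).symm

variable [Fintype F]

lemma card_filter_apply_ne_zero {E : Type*} [AddCommGroup E] [Module F E] [Fintype E]
    {g : Module.Dual F E} (hg : g ≠ 0) :
    #{x | g x ≠ 0} = (Fintype.card F - 1) * Fintype.card F ^ (Module.finrank F E - 1) := by
  have hker := Module.Dual.finrank_ker_add_one_of_ne_zero hg
  rw [← hker, Nat.add_sub_cancel]
  have hzero : #{x | g x = 0} = Fintype.card F ^ Module.finrank F (LinearMap.ker g) := by
    rw [← Fintype.card_subtype, ← Module.card_eq_pow_finrank]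
    exact Fintype.card_congr (Equiv.subtypeEquivRight fun x => LinearMap.mem_ker.symm)
  have hsplit := card_filter_add_card_filter_not (s := univ) (fun x => g x = 0)
  rw [card_univ, Module.card_eq_pow_finrank (K := F), hzero, ← hker, pow_succ'] at hsplit
  simp only [← ne_eq] at hsplit
  rw [Nat.sub_mul, one_mul]
  omega

lemma card_filter_apply_ne_zero_le {E : Type*} [AddCommGroup E] [Module F E] [Fintype E]
    (g : Module.Dual F E) :
    #{x | g x ≠ 0} ≤ (Fintype.card F - 1) * Fintype.card F ^ (Module.finrank F E - 1) := by
  by_cases hg : g = 0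
  · simp [hg]
  · exact (card_filter_apply_ne_zero hg).le

lemma card_filter_rep_mul (P : V → Prop) [DecidablePred P]
    (hP : ∀ (a : Fˣ) (v : V), P (a • v) ↔ P v) :
    #{p : ℙ F V | P p.rep} * (Fintype.card F - 1) = #{v : V | v ≠ 0 ∧ P v} := by
  rw [← Fintype.card_units, ← Fintype.card_subtype, ← Fintype.card_subtype, ← Fintype.card_prod]
  refine Fintype.card_of_bijective (f := fun x => ⟨x.2 • x.1.1.rep, ?_, ?_⟩) ⟨?_, ?_⟩
  · exact smul_ne_zero x.2.ne_zero x.1.1.rep_nonzero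
  · exact (hP x.2 _).2 x.1.2
  · rintro ⟨⟨p, hp⟩, a⟩ ⟨⟨p', hp'⟩, b⟩ h
    have h' : a • p.rep = b • p'.rep := congrArg Subtype.val h
    obtain rfl : p = p' := by
      rw [← p.mk_rep, ← p'.mk_rep, Projectivization.mk_eq_mk_iff]
      exact ⟨a⁻¹ * b, by rw [mul_smul, ← h', inv_smul_smul]⟩
    obtain rfl : a = b := Units.ext (smul_left_injective F p.rep_nonzero h')
    rfl
  · rintro ⟨v, hv, hPv⟩
    obtain ⟨a, ha⟩ := Projectivization.exists_smul_eq_mk_rep F v hv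
    refine ⟨⟨⟨Projectivization.mk F v hv, ?_⟩, a⁻¹⟩, ?_⟩
    · rw [← ha]
      exact (hP a v).2 hPv
    · exact Subtype.ext (by simp only [← ha, inv_smul_smul])

lemma card_filter_rep_apply_ne_zero {f : Module.Dual F V} (hf : f ≠ 0) :
    #{p : ℙ F V | f p.rep ≠ 0} = Fintype.card F ^ (Module.finrank F V - 1) := by
  have h := card_filter_rep_mul (F := F) (fun v => f v ≠ 0) fun a v => by
    simp [Units.smul_def, a.ne_zero]
  have hne : #{v : V | v ≠ 0 ∧ f v ≠ 0} = #{v | f v ≠ 0} :=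
    congrArg card (filter_congr fun v _ => and_iff_right_of_imp fun h h0 => h (by simp [h0]))
  rw [hne, card_filter_apply_ne_zero hf, mul_comm] at h
  exact Nat.eq_of_mul_eq_mul_left (card_sub_one_pos F) h

lemma card_filter_rep_apply_ne_zero_mem_le (f : Module.Dual F V) (W : Submodule F V) :
    #{p : ℙ F V | f p.rep ≠ 0 ∧ p.rep ∈ W} ≤ Fintype.card F ^ (Module.finrank F W - 1) := by
  have h := card_filter_rep_mul (F := F) (fun v => f v ≠ 0 ∧ v ∈ W) fun a v => by
    simp [Units.smul_def, a.ne_zero, Submodule.smul_mem_iff _ a.ne_zero]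
  have hW : #{v : V | v ≠ 0 ∧ f v ≠ 0 ∧ v ∈ W} = #{w : W | f.domRestrict W w ≠ 0} := by
    calc #{v : V | v ≠ 0 ∧ f v ≠ 0 ∧ v ∈ W} = #{v | v ∈ W ∧ f v ≠ 0} :=
          congrArg card (filter_congr fun v _ =>
            ⟨fun h => ⟨h.2.2, h.2.1⟩, fun h => ⟨fun h0 => h.2 (by simp [h0]), h.2, h.1⟩⟩)
      _ = #{w : W | f.domRestrict W w ≠ 0} := card_filter_mem_and W _
  rw [hW, mul_comm] at h
  exact Nat.le_of_mul_le_mul_left (h ▸ card_filter_apply_ne_zero_le _) (card_sub_one_pos F)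

lemma card_filter_rep_mem (W : Submodule F V) :
    #{p : ℙ F V | p.rep ∈ W} = ∑ j ∈ range (Module.finrank F W), Fintype.card F ^ j := by
  have h := card_filter_rep_mul (F := F) (· ∈ W) fun a v => by
    simp [Units.smul_def, Submodule.smul_mem_iff _ a.ne_zero]
  have hW : #{v : V | v ≠ 0 ∧ v ∈ W} = Fintype.card F ^ Module.finrank F W - 1 := by
    calc #{v : V | v ≠ 0 ∧ v ∈ W} = #{v | v ∈ W ∧ v ≠ 0} :=
          congrArg card (filter_congr fun v _ => and_comm)
      _ = #{w : W | (w : V) ≠ 0} := card_filter_mem_and W _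
      _ = #(univ.erase (0 : W)) := congrArg card (by ext; simp)
      _ = _ := by rw [card_erase_of_mem (mem_univ (0 : W)), card_univ,
            Module.card_eq_pow_finrank (K := F) (V := W)]
  have hgeom := geom_sum_mul_add (Fintype.card F - 1) (Module.finrank F W)
  rw [Nat.sub_add_cancel (Nat.one_le_iff_ne_zero.2 Fintype.card_ne_zero)] at hgeom
  rw [hW, ← hgeom, Nat.add_sub_cancel] at h
  exact Nat.eq_of_mul_eq_mul_right (card_sub_one_pos F) h

end ProjectiveCounting

lemma exists_fin_enum {α : Type*} [Fintype α] (m : α → ℕ) :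
    ∃ col : Fin (∑ x, m x) → α, ∀ x, #{j | col j = x} = m x := by
  let e : (Σ x, Fin (m x)) ≃ Fin (∑ x, m x) :=
    Fintype.equivFinOfCardEq (by rw [Fintype.card_sigma]; simp)
  refine ⟨fun j => (e.symm j).1, fun x => ?_⟩
  calc #{j | (e.symm j).1 = x} = #{y : Σ x, Fin (m x) | y.1 = x} :=
        card_equiv e.symm (by simp)
    _ = m x := by
          rw [card_filter, Fintype.sum_sigma, Fintype.sum_eq_single x (fun y hy => by simp [hy])]
          simp

lemma card_filter_comp_eq_sum {α : Type*} [Fintype α] {n : ℕ} {col : Fin n → α} {m : α → ℕ}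
    (hcol : ∀ x, #{j | col j = x} = m x) (P : α → Prop) [DecidablePred P] :
    #{j | P (col j)} = ∑ x ∈ {x | P x}, m x := by
  rw [card_eq_sum_card_fiberwise (f := col) (t := {x | P x}) (fun j hj => by simpa using hj)]
  refine sum_congr rfl fun x hx => ?_
  rw [← hcol x, filter_filter]
  exact congrArg card (filter_congr fun j _ => ⟨And.right, fun h => ⟨h ▸ (mem_filter.1 hx).2, h⟩⟩)

lemma hasLocality_of_forall_exists_ne {F : Type} [Field F] {n r : ℕ}
    (C : Submodule F (Fin n → F)) (hr : 1 ≤ r) (h : ∀ i, ∃ j ≠ i, ∀ c ∈ C, c j = c i) :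
    HasLocality C r := by
  intro i
  obtain ⟨j, hji, hj⟩ := h i
  refine ⟨{j}, by simpa using hji.symm, by simpa using hr, fun c hc c' hc' hag => ?_⟩
  rw [← hj c hc, ← hj c' hc', hag j (mem_singleton_self j)]

theorem exists_isCode_hasLocality_of_mult {F : Type} {V : Type*} [Field F] [AddCommGroup V]
    [Module F V] [Fintype V] (m : ℙ F V → ℕ) (hm : ∀ p, 2 ≤ m p) {d r : ℕ} (hr : 1 ≤ r)
    (hd : ∀ f : Module.Dual F V, f ≠ 0 → d ≤ ∑ p ∈ {p | f p.rep ≠ 0}, m p) :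
    ∃ C : Submodule F (Fin (∑ p, m p) → F), IsCode (Module.finrank F V) d C ∧ HasLocality C r := by
  obtain ⟨col, hcol⟩ := exists_fin_enum m
  let φ : Module.Dual F V →ₗ[F] (Fin (∑ p, m p) → F) :=
    LinearMap.pi fun j => Module.Dual.eval F V (col j).rep
  have hφ : ∀ f j, φ f j = f (col j).rep := fun _ _ => rfl
  have hrep : ∀ p, 1 < #{j | col j = p} := fun p => by rw [hcol]; exact hm p
  have hinj : Function.Injective φ := by
    refine (injective_iff_map_eq_zero φ).2 fun f hf => LinearMap.ext fun v => ?_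
    by_cases hv : v = 0
    · simp [hv]
    obtain ⟨a, ha⟩ := Projectivization.exists_smul_eq_mk_rep F v hv
    obtain ⟨j, hj⟩ := card_pos.1 (zero_lt_one.trans (hrep (Projectivization.mk F v hv)))
    have h0 : f (a • v) = 0 := by
      rw [ha, ← (mem_filter.1 hj).2, ← hφ, hf, Pi.zero_apply]
    simpa [Units.smul_def, a.ne_zero] using h0
  refine ⟨LinearMap.range φ, ⟨?_, ?_⟩, hasLocality_of_forall_exists_ne _ hr fun j => ?_⟩
  · rw [LinearMap.finrank_range_of_inj hinj, Subspace.dual_finrank_eq]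
  · rintro _ ⟨f, rfl⟩ hf
    have hf0 : f ≠ 0 := fun h => hf (by rw [h, map_zero])
    exact (hd f hf0).trans_eq (card_filter_comp_eq_sum hcol (fun p => f p.rep ≠ 0)).symm
  · obtain ⟨j', hj', hne⟩ := exists_mem_ne (hrep (col j)) j
    refine ⟨j', hne, ?_⟩
    rintro _ ⟨f, rfl⟩
    rw [hφ, hφ, (mem_filter.1 hj').2]

lemma exists_finrank_eq_succ (F V : Type*) [Field F] [AddCommGroup V] [Module F V]
    [FiniteDimensional F V] :
    ∃ U : ℕ → Submodule F V, ∀ i < Module.finrank F V, Module.finrank F (U i) = i + 1 := by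
  let b := Module.finBasis F V
  refine ⟨fun i => Submodule.span F (Set.range (b ∘ Fin.castLE (min_le_right (i + 1) _))),
    fun i hi => ?_⟩
  beta_reduce
  rw [finrank_span_eq_card (b.linearIndependent.comp _ (Fin.castLE_injective _)),
    Fintype.card_fin]
  omega

section Anticode

variable {F V : Type*} [Field F] [AddCommGroup V] [Module F V]

/-- Belov's anticode: `a i` copies of the points of each `U i`, as a multiplicity function. -/
noncomputable def anticodeMult (U : ℕ → Submodule F V) (a : ℕ → ℕ) (n : ℕ) (p : ℙ F V) : ℕ :=
  ∑ i ∈ range n, if p.rep ∈ U i then a i else 0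

variable {U : ℕ → Submodule F V} {a : ℕ → ℕ} {n : ℕ}

lemma anticodeMult_le {b : ℕ} (ha : ∀ i, a i ≤ b) (p : ℙ F V) : anticodeMult U a n p ≤ n * b :=
  calc anticodeMult U a n p ≤ ∑ _i ∈ range n, b :=
        sum_le_sum fun i _ => by split_ifs; exacts [ha i, Nat.zero_le b]
    _ = n * b := by rw [sum_const, card_range, smul_eq_mul]

variable [Fintype F] [Fintype V]

lemma sum_filter_anticodeMult_le (hU : ∀ i < n, Module.finrank F (U i) = i + 1)
    (f : Module.Dual F V) :
    ∑ p ∈ {p : ℙ F V | f p.rep ≠ 0}, anticodeMult U a n p ≤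
      ∑ i ∈ range n, a i * Fintype.card F ^ i := by
  unfold anticodeMult
  rw [sum_comm]
  refine sum_le_sum fun i hi => ?_
  rw [← sum_filter, sum_const, smul_eq_mul, filter_filter, mul_comm]
  refine Nat.mul_le_mul_left _ ((card_filter_rep_apply_ne_zero_mem_le f (U i)).trans ?_)
  rw [hU i (mem_range.1 hi), Nat.add_sub_cancel]

lemma sum_anticodeMult (hU : ∀ i < n, Module.finrank F (U i) = i + 1) :
    ∑ p : ℙ F V, anticodeMult U a n p =
      ∑ i ∈ range n, a i * ∑ j ∈ range (i + 1), Fintype.card F ^ j := by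
  unfold anticodeMult
  rw [sum_comm]
  refine sum_congr rfl fun i hi => ?_
  rw [← sum_filter, sum_const, smul_eq_mul, card_filter_rep_mem, hU i (mem_range.1 hi), mul_comm]

lemma sum_sub_anticodeMult {s : ℕ} (hU : ∀ i < n, Module.finrank F (U i) = i + 1)
    (hs : ∀ p, anticodeMult U a n p ≤ s) :
    ∑ p : ℙ F V, (s - anticodeMult U a n p) =
      s * ∑ j ∈ range (Module.finrank F V), Fintype.card F ^ j -
        ∑ i ∈ range n, a i * ∑ j ∈ range (i + 1), Fintype.card F ^ j := by
  rw [sum_tsub_distrib _ fun p _ => hs p, sum_const, card_univ, smul_eq_mul,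
    Fintype.card_eq_nat_card, Projectivization.card_of_finrank F V rfl, Nat.card_eq_fintype_card,
    sum_anticodeMult hU, mul_comm]

lemma sub_le_sum_filter_sub_anticodeMult {s : ℕ} (hU : ∀ i < n, Module.finrank F (U i) = i + 1)
    (hs : ∀ p, anticodeMult U a n p ≤ s) {f : Module.Dual F V} (hf : f ≠ 0) :
    s * Fintype.card F ^ (Module.finrank F V - 1) - ∑ i ∈ range n, a i * Fintype.card F ^ i ≤
      ∑ p ∈ {p : ℙ F V | f p.rep ≠ 0}, (s - anticodeMult U a n p) := by
  rw [sum_tsub_distrib _ fun p _ => hs p, sum_const, smul_eq_mul, card_filter_rep_apply_ne_zero hf,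
    mul_comm]
  exact Nat.sub_le_sub_left (sum_filter_anticodeMult_le hU f) _

end Anticode

theorem exists_isCode_hasLocality_griesmer {F : Type} {V : Type*} [Field F] [Fintype F]
    [AddCommGroup V] [Module F V] [Fintype V] {q k d r : ℕ} (hq : Fintype.card F = q)
    (hk : Module.finrank F V = k) (hr : 1 ≤ r) (hd : ((k - 1) * (q - 1) + 2) * q ^ (k - 1) ≤ d) :
    ∃ C : Submodule F (Fin (griesmer q k d) → F), IsCode k d C ∧ HasLocality C r := by
  have hq1 : 1 < q := hq ▸ Fintype.one_lt_card
  have hqk : 0 < q ^ (k - 1) := pow_pos (by omega) _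
  obtain ⟨s, e, hde, he⟩ := exists_add_eq_mul hqk d
  have hs : (k - 1) * (q - 1) + 2 ≤ s := Nat.le_of_mul_le_mul_right (by omega) hqk
  obtain ⟨U, hU⟩ := exists_finrank_eq_succ F V
  have hU' : ∀ i < k - 1, Module.finrank F (U i) = i + 1 := fun i hi => hU i (by omega)
  have hmult : ∀ p, anticodeMult U (fun i => e / q ^ i % q) (k - 1) p + 2 ≤ s := fun p => by
    have := anticodeMult_le (U := U) (n := k - 1) (a := fun i => e / q ^ i % q)
      (fun i => Nat.le_sub_one_of_lt (Nat.mod_lt _ (show 0 < q by omega))) p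
    omega
  have hmult' := fun p => (Nat.le_add_right _ 2).trans (hmult p)
  have hlen : ∑ p, (s - anticodeMult U (fun i => e / q ^ i % q) (k - 1) p) = griesmer q k d := by
    rw [sum_sub_anticodeMult hU' hmult', hk, hq]
    have := griesmer_add_sum_digit_mul_geom (by omega) he hde
    omega
  have hweight : ∀ f : Module.Dual F V, f ≠ 0 →
      d ≤ ∑ p ∈ {p | f p.rep ≠ 0}, (s - anticodeMult U (fun i => e / q ^ i % q) (k - 1) p) := by
    intro f hf
    have := sub_le_sum_filter_sub_anticodeMult hU' hmult' hf
    rw [hk, hq, sum_digit_mul_pow, Nat.mod_eq_of_lt he] at this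
    omega
  obtain ⟨C, hC⟩ := exists_isCode_hasLocality_of_mult _ (fun p => by have := hmult p; omega) hr
    hweight
  rw [hk] at hC
  exact hlen ▸ ⟨C, hC⟩

lemma hamWt_eq_hammingNorm {F : Type} [Field F] {n : ℕ} (c : Fin n → F) :
    hamWt c = hammingNorm c :=
  rfl

lemma griesmer_le_of_lrcExists {q n k d r : ℕ} (hq : q ≠ 0) (h : LRCExists q n k d r) :
    griesmer q k d ≤ n := by
  obtain ⟨F, _, hF, C, ⟨hk, hd⟩, -⟩ := h
  have : Finite F := Nat.finite_of_card_ne_zero (hF ▸ hq)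
  let _ : Fintype F := Fintype.ofFinite F
  have := griesmer_le_card C hk fun c hc hc0 =>
    (hd c hc hc0).trans_eq (hamWt_eq_hammingNorm c)
  rwa [Fintype.card_fin, Fintype.card_eq_nat_card, hF] at this

lemma lrcExists_griesmer {q k d r : ℕ} (hq : IsPrimePow q) (hr : 1 ≤ r)
    (hd : ((k - 1) * (q - 1) + 2) * q ^ (k - 1) ≤ d) : LRCExists q (griesmer q k d) k d r := by
  obtain ⟨p, n, hp, hn, rfl⟩ := hq
  have := Fact.mk (Nat.prime_iff.2 hp)
  let _ : Fintype (GaloisField p n) := Fintype.ofFinite _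
  have hcard := GaloisField.card p n hn.ne'
  obtain ⟨C, hC⟩ := exists_isCode_hasLocality_griesmer (V := Fin k → GaloisField p n)
    (by rw [Fintype.card_eq_nat_card, hcard]) (Module.finrank_fin_fun _) hr hd
  exact ⟨GaloisField p n, inferInstance, hcard, C, hC⟩

theorem griesmer_attained_for_large_d_general (q : ℕ) (hq : IsPrimePow q) (k r : ℕ)
    (hr : 1 ≤ r) :
    ∃ d₀ : ℕ, ∀ d : ℕ, d₀ ≤ d → nLRC q k d r = griesmer q k d := by
  refine ⟨((k - 1) * (q - 1) + 2) * q ^ (k - 1), fun d hd => ?_⟩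
  have hmem := lrcExists_griesmer hq hr hd
  exact le_antisymm (Nat.sInf_le hmem)
    (le_csInf ⟨_, hmem⟩ fun n hn => griesmer_le_of_lrcExists hq.pos.ne' hn)

theorem griesmer_attained_for_large_d (q : ℕ) (hq : IsPrimePow q) (k r : ℕ)
    (hk : 2 ≤ k) (hr : 1 ≤ r) :
    ∃ d₀ : ℕ, ∀ d : ℕ, d₀ ≤ d → nLRC q k d r = griesmer q k d :=
  griesmer_attained_for_large_d_general q hq k r hr
end

section
/- Over the binary field, for each natural number t ≥ 0 one has n_2(4,5+8t,2) = 11+15t, n_2(4,6+8t,2) = 12+15t, n_2(4,7+8t,2) = 14+15t, n_2(4,8+8t,2) = 15+15t, n_2(4,9+8t,2) = 19+15t, n_2(4,10+8t,2) = 20+15t, n_2(4,11+8t,2) = 22+15t, and n_2(4,12+8t,2) = 23+15t; moreover n_2(4,1,2) = n_2(4,2,2) = 6, n_2(4,3,2) = 8, and n_2(4,4,2) = 9. -/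
open scoped Classical

open Finset


section FieldTwo
variable {F : Type} [Field F]

lemma two_elt (h2 : Nat.card F = 2) (x : F) : x = 0 ∨ x = 1 := by
  have hfin : Finite F := Nat.finite_of_card_ne_zero (by omega)
  have : Fintype F := Fintype.ofFinite F
  have hcard : Fintype.card F = 2 := by rw [← Nat.card_eq_fintype_card, h2]
  have hsub : ({0, 1} : Finset F) = Finset.univ := by
    apply Finset.eq_of_subset_of_card_le (Finset.subset_univ _)
    rw [Finset.card_univ, hcard]
    rw [Finset.card_insert_of_notMem (by simp), Finset.card_singleton]
  have : x ∈ ({0, 1} : Finset F) := hsub ▸ Finset.mem_univ x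
  simpa using this

lemma ne_zero_eq_one (h2 : Nat.card F = 2) {x : F} (hx : x ≠ 0) : x = 1 :=
  (two_elt h2 x).resolve_left hx

lemma char_two (h2 : Nat.card F = 2) (x : F) : x + x = 0 := by
  rcases two_elt h2 x with h | h
  · simp [h]
  · subst h
    rcases two_elt h2 (1 + 1) with h' | h'
    · exact h'
    · have : (1 : F) = 0 := by linear_combination h'
      exact absurd this one_ne_zero

end FieldTwo

section Wt
variable {F : Type} [Field F] {ι : Type} [Fintype ι]

/-- weight of a vector over an arbitrary fintype index -/
noncomputable def wtt (c : ι → F) : ℕ :=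
  (Finset.univ.filter fun i => c i ≠ 0).card

lemma fcc {p q : ι → Prop} [DecidablePred p] [DecidablePred q] (h : ∀ i, p i ↔ q i) :
    (Finset.univ.filter p).card = (Finset.univ.filter q).card := by
  congr 1
  exact Finset.filter_congr fun i _ => h i

lemma wt_restrict (s : Finset ι) (x : ι → F) :
    wtt (fun u : {a // a ∈ s} => x u.val) = (s.filter fun i => x i ≠ 0).card := by
  unfold wtt
  apply Finset.card_bij (fun u _ => u.val)
  · intro u hu
    simp only [Finset.mem_filter] at hu ⊢
    exact ⟨u.property, hu.2⟩
  · intro a ha b hb hab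
    exact Subtype.ext hab
  · intro b hb
    simp only [Finset.mem_filter] at hb
    exact ⟨⟨b, hb.1⟩, by simp [hb.2], rfl⟩

lemma split_card (P : ι → Prop) [DecidablePred P] (c : ι → F) :
    (Finset.univ.filter P).card =
      (Finset.univ.filter fun i => P i ∧ c i ≠ 0).card +
      (Finset.univ.filter fun i => P i ∧ c i = 0).card := by
  have h := Finset.card_filter_add_card_filter_not
    (s := Finset.univ.filter P) (p := fun i => c i ≠ 0)
  rw [Finset.filter_filter, Finset.filter_filter] at h
  rw [← h]
  congr 1
  exact fcc fun i => by tauto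

lemma total_card (c : ι → F) :
    wtt c + (Finset.univ.filter fun i => c i = 0).card = Fintype.card ι := by
  have h := Finset.card_filter_add_card_filter_not
    (s := (Finset.univ : Finset ι)) (p := fun i => c i ≠ 0)
  unfold wtt
  rw [← Finset.card_univ]
  rw [← h]
  congr 2
  exact Finset.filter_congr fun i _ => by tauto

end Wt

/-- iterated binary Griesmer sum -/
def gsum : ℕ → ℕ → ℕ
  | 0, _ => 0
  | (k+1), d => d + gsum k ((d+1)/2)

section Griesmer
variable {F : Type} [Field F]

theorem gries2 (h2 : Nat.card F = 2) :
    ∀ (k d : ℕ), 1 ≤ d → ∀ (ι : Type) [Fintype ι] (C : Submodule F (ι → F)),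
      k ≤ Module.finrank F C → (∀ c ∈ C, c ≠ 0 → d ≤ wtt c) → gsum k d ≤ Fintype.card ι := by
  intro k
  induction k with
  | zero => intro d hd ι _ C hk hw; simp [gsum]
  | succ k ih =>
    intro d hd ι _ C hk hw
    have hCne : ∃ c ∈ C, c ≠ 0 := by
      by_contra h
      push_neg at h
      have hbot : C = ⊥ := by
        apply le_antisymm _ bot_le
        intro x hx
        by_cases hx0 : x = 0
        · simp [hx0]
        · exact absurd (h x hx) (by simp [hx0])
      rw [hbot] at hk
      simp [finrank_bot] at hk
    have hPne : {m | ∃ c ∈ C, c ≠ 0 ∧ wtt c = m}.Nonempty := by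
      obtain ⟨c, hc, hc0⟩ := hCne
      exact ⟨wtt c, c, hc, hc0, rfl⟩
    obtain ⟨c₀, hc₀C, hc₀0, hc₀w⟩ := Nat.sInf_mem hPne
    set w := sInf {m | ∃ c ∈ C, c ≠ 0 ∧ wtt c = m} with hwdef
    have hmin : ∀ c ∈ C, c ≠ 0 → w ≤ wtt c := fun c hc hc0 => Nat.sInf_le ⟨c, hc, hc0, rfl⟩
    have hdw : d ≤ w := hc₀w ▸ hw c₀ hc₀C hc₀0
    -- counts for a pair of codewords
    have e2 : ∀ c' : ι → F, wtt c' =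
        (Finset.univ.filter fun i => c₀ i ≠ 0 ∧ c' i ≠ 0).card +
        (Finset.univ.filter fun i => c₀ i = 0 ∧ c' i ≠ 0).card := by
      intro c'
      unfold wtt
      rw [split_card (fun i => c' i ≠ 0) c₀]
      congr 1
      · exact fcc fun i => by tauto
      · exact fcc fun i => by tauto
    have e0 : wtt c₀ =
        (Finset.univ.filter fun i => c₀ i ≠ 0 ∧ c₀ i ≠ 0).card := by
      unfold wtt; exact fcc fun i => by tauto
    have e0' : ∀ c' : ι → F,
        (Finset.univ.filter fun i => c₀ i ≠ 0 ∧ c₀ i ≠ 0).card =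
        (Finset.univ.filter fun i => c₀ i ≠ 0 ∧ c' i ≠ 0).card +
        (Finset.univ.filter fun i => c₀ i ≠ 0 ∧ c' i = 0).card := by
      intro c'
      have := split_card (fun i => c₀ i ≠ 0 ∧ c₀ i ≠ 0) c'
      rw [this]
      congr 1
      · exact fcc fun i => by tauto
      · exact fcc fun i => by tauto
    have e3 : ∀ c' : ι → F, wtt (c' + c₀) =
        (Finset.univ.filter fun i => c₀ i ≠ 0 ∧ c' i = 0).card +
        (Finset.univ.filter fun i => c₀ i = 0 ∧ c' i ≠ 0).card := by
      intro c'
      have hpt : ∀ i, ((c' + c₀) i ≠ 0) ↔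
          ((c₀ i ≠ 0 ∧ c' i = 0) ∨ (c₀ i = 0 ∧ c' i ≠ 0)) := by
        intro i
        by_cases h0 : c₀ i = 0
        · simp [Pi.add_apply, h0]
        · have h1 : c₀ i = 1 := ne_zero_eq_one h2 h0
          constructor
          · intro hne
            left
            refine ⟨h0, ?_⟩
            by_contra hc'i
            have : c' i = 1 := ne_zero_eq_one h2 hc'i
            exact hne (by simp [Pi.add_apply, this, h1]; exact char_two h2 1)
          · rintro (⟨-, hz⟩ | ⟨hz, -⟩)
            · simp [Pi.add_apply, hz, h1]
            · exact absurd hz h0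
      unfold wtt
      rw [fcc hpt, Finset.filter_or, Finset.card_union_of_disjoint]
      rw [Finset.disjoint_left]
      intro a ha hb
      simp only [Finset.mem_filter] at ha hb
      tauto
    -- residual index set
    have hsmem : ∀ i : ι, i ∈ (Finset.univ.filter fun j => c₀ j = 0) ↔ c₀ i = 0 := by
      intro i; simp
    set s : Finset ι := Finset.univ.filter (fun j => c₀ j = 0) with hs
    set ι' := {a // a ∈ s} with hι'
    have hcards : Fintype.card ι = w + Fintype.card ι' := by
      have h1 : Fintype.card ι' = s.card := Fintype.card_coe s
      have h2' := total_card (F := F) c₀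
      rw [h1, hs]
      omega
    set π : (ι → F) →ₗ[F] (ι' → F) := LinearMap.funLeft F F (Subtype.val : ι' → ι) with hπ
    have hπc₀ : π c₀ = 0 := by
      funext u
      exact ((hsmem u.val).mp u.property : c₀ u.val = 0)
    have hπres : ∀ c' : ι → F, wtt (π c') =
        (Finset.univ.filter fun i => c₀ i = 0 ∧ c' i ≠ 0).card := by
      intro c'
      have : π c' = fun u : ι' => c' u.val := rfl
      rw [this, wt_restrict, hs, Finset.filter_filter]
    -- residual weight bound
    have hwt' : ∀ y ∈ C.map π, y ≠ 0 → (d+1)/2 ≤ wtt y := by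
      rintro y hy hy0
      obtain ⟨c', hc', rfl⟩ := hy
      have hc'0 : c' ≠ 0 := by rintro rfl; simp at hy0
      have hne : c' + c₀ ≠ 0 := by
        intro h
        have hcc : c' = c₀ := by
          funext i
          have hci := congrFun h i
          simp only [Pi.add_apply, Pi.zero_apply] at hci
          have h2' := char_two h2 (c₀ i)
          linear_combination hci - h2'
        rw [hcc] at hy0
        exact hy0 hπc₀
      have h1 := hmin c' hc' hc'0
      have h22 := hmin _ (C.add_mem hc' hc₀C) hne
      have q1 := e2 c'
      have q2 := e0' c'
      have q3 := e3 c'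
      have q4 := hπres c'
      rw [← hc₀w] at *
      omega
    -- kernel of restriction
    have hker : ∀ c' ∈ C, π c' = 0 → c' = 0 ∨ c' = c₀ := by
      intro c' hc' hπ0
      by_cases hc'0 : c' = 0
      · exact Or.inl hc'0
      right
      have hb0 : (Finset.univ.filter fun i => c₀ i = 0 ∧ c' i ≠ 0).card = 0 := by
        rw [← hπres c', hπ0]
        unfold wtt
        simp
      have h1 := hmin c' hc' hc'0
      have q1 := e2 c'
      have q2 := e0' c'
      rw [← hc₀w] at *
      have hA0 : (Finset.univ.filter fun i => c₀ i ≠ 0 ∧ c' i = 0).card = 0 := by omega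
      funext i
      by_cases h0 : c₀ i = 0
      · have : c' i = 0 := by
          have hu : i ∈ s := (hsmem i).mpr h0
          have := congrFun hπ0 (⟨i, hu⟩ : ι')
          exact this
        rw [this, h0]
      · have hne : c' i ≠ 0 := by
          intro hz
          have : i ∈ (Finset.univ.filter fun j => c₀ j ≠ 0 ∧ c' j = 0) := by
            simp [h0, hz]
          rw [Finset.card_eq_zero] at hA0
          rw [hA0] at this
          simp at this
        rw [ne_zero_eq_one h2 hne, ne_zero_eq_one h2 h0]
    -- rank of the residual code
    have hrank : k ≤ Module.finrank F (C.map π) := by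
      have hrange : LinearMap.range (π ∘ₗ C.subtype) = C.map π := by
        rw [LinearMap.range_comp, Submodule.range_subtype]
      have hkerle : LinearMap.ker (π ∘ₗ C.subtype) ≤ Submodule.span F {(⟨c₀, hc₀C⟩ : C)} := by
        intro x hx
        have hx' : π x.val = 0 := hx
        rcases hker x.val x.property hx' with h0 | hc
        · have : x = 0 := Subtype.ext h0
          rw [this]; exact Submodule.zero_mem _
        · have : x = ⟨c₀, hc₀C⟩ := Subtype.ext hc
          rw [this]; exact Submodule.mem_span_singleton_self _
      have hkfr : Module.finrank F (LinearMap.ker (π ∘ₗ C.subtype)) ≤ 1 := by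
        refine le_trans (Submodule.finrank_mono hkerle) ?_
        rw [finrank_span_singleton]
        intro h
        exact hc₀0 (by simpa using congrArg Subtype.val h)
      have hrn := LinearMap.finrank_range_add_finrank_ker (π ∘ₗ C.subtype)
      rw [hrange] at hrn
      have : Module.finrank F C = Module.finrank F (↥(C.map π)) +
          Module.finrank F (LinearMap.ker (π ∘ₗ C.subtype)) := hrn.symm
      omega
    have ihap := ih ((d+1)/2) (by omega) ι' (C.map π) hrank hwt'
    have : gsum (k+1) d = d + gsum k ((d+1)/2) := rfl
    omega
end Griesmer

section Shorten
variable {F : Type} [Field F]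

lemma ker_funLeft_finrank {n : ℕ} (s : Finset (Fin n)) :
    s.card + Module.finrank F
      (LinearMap.ker (LinearMap.funLeft F F (Subtype.val : {a // a ∈ s} → Fin n))) = n := by
  have hrn := LinearMap.finrank_range_add_finrank_ker
    (LinearMap.funLeft F F (Subtype.val : {a // a ∈ s} → Fin n))
  have hsurj : LinearMap.range (LinearMap.funLeft F F (Subtype.val : {a // a ∈ s} → Fin n)) = ⊤ :=
    LinearMap.range_eq_top.mpr (LinearMap.funLeft_surjective_of_injective F F _ Subtype.val_injective)
  rw [hsurj] at hrn
  rw [finrank_top, Module.finrank_pi, Module.finrank_pi, Fintype.card_coe, Fintype.card_fin] at hrn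
  omega

lemma loc_zero {n : ℕ} {C : Submodule F (Fin n → F)} {i : Fin n} {S : Finset (Fin n)}
    (hrec : ∀ c ∈ C, ∀ c' ∈ C, (∀ j ∈ S, c j = c' j) → c i = c' i) :
    ∀ c ∈ C, (∀ j ∈ S, c j = 0) → c i = 0 := by
  intro c hc h
  have := hrec c hc 0 (Submodule.zero_mem C) (by simpa using h)
  simpa using this

lemma shorten {n : ℕ} (h2 : Nat.card F = 2) (C : Submodule F (Fin n → F))
    (h4 : Module.finrank F C = 4) {d : ℕ} (hd : 1 ≤ d)
    (hw : ∀ c ∈ C, c ≠ 0 → d ≤ wtt c) (hloc : HasLocality C 2) :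
    ∃ s : ℕ, s ≤ 2 ∧ s + 1 + gsum (4 - s) d ≤ n := by
  have hn4 : 4 ≤ n := by
    have := Submodule.finrank_le C
    rw [Module.finrank_pi, Fintype.card_fin] at this
    omega
  obtain ⟨S, hiS, hScard, hrec⟩ := hloc ⟨0, by omega⟩
  set i : Fin n := ⟨0, by omega⟩
  have hz := loc_zero hrec
  set fS := LinearMap.funLeft F F (Subtype.val : {a // a ∈ S} → Fin n) with hfS
  set V := LinearMap.ker fS with hV
  have hVfr : S.card + Module.finrank F V = n := ker_funLeft_finrank S
  set D := C ⊓ V with hD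
  have hDfr : Module.finrank F C + Module.finrank F V ≤ n + Module.finrank F D := by
    have h := Submodule.finrank_sup_add_finrank_inf_eq C V
    rw [← hD] at h
    have h2' : Module.finrank F (C ⊔ V : Submodule F (Fin n → F)) ≤ n := by
      have := Submodule.finrank_le (C ⊔ V : Submodule F (Fin n → F))
      rw [Module.finrank_pi, Fintype.card_fin] at this
      exact this
    omega
  set T := insert i S with hT
  have hTcard : T.card = S.card + 1 := Finset.card_insert_of_notMem hiS
  have hDvan : ∀ x ∈ D, ∀ j ∈ T, x j = 0 := by
    intro x hx j hj
    have hxC : x ∈ C := hx.1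
    have hxV : ∀ u ∈ S, x u = 0 := by
      intro u hu
      exact congrFun (hx.2 : fS x = 0) ⟨u, hu⟩
    rcases Finset.mem_insert.mp hj with rfl | hjS
    · exact hz x hxC hxV
    · exact hxV j hjS
  set U := Tᶜ with hU
  have hUcard : U.card + T.card = n := by
    rw [hU, Finset.card_compl]
    have := Finset.card_le_univ T
    simp only [Finset.card_univ, Fintype.card_fin] at this ⊢
    omega
  set π := LinearMap.funLeft F F (Subtype.val : {a // a ∈ U} → Fin n) with hπ
  have hinj : ∀ x ∈ D, π x = 0 → x = 0 := by
    intro x hx hπx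
    funext j
    by_cases hj : j ∈ T
    · exact hDvan x hx j hj
    · have : j ∈ U := Finset.mem_compl.mpr hj
      exact congrFun hπx ⟨j, this⟩
  -- rank of image
  have hrange : LinearMap.range (π ∘ₗ D.subtype) = D.map π := by
    rw [LinearMap.range_comp, Submodule.range_subtype]
  have hker : LinearMap.ker (π ∘ₗ D.subtype) = ⊥ := by
    rw [LinearMap.ker_eq_bot']
    intro x hx
    exact Subtype.ext (hinj x.val x.property hx)
  have hEfr : Module.finrank F (D.map π) = Module.finrank F D := by
    have hrn := LinearMap.finrank_range_add_finrank_ker (π ∘ₗ D.subtype)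
    rw [hrange, hker, finrank_bot] at hrn
    omega
  -- weights of image
  have hEwt : ∀ y ∈ D.map π, y ≠ 0 → d ≤ wtt y := by
    rintro y hy hy0
    obtain ⟨x, hx, rfl⟩ := hy
    have hx0 : x ≠ 0 := by rintro rfl; simp at hy0
    have hwx := hw x hx.1 hx0
    have : π x = fun u : {a // a ∈ U} => x u.val := rfl
    rw [this, wt_restrict]
    have heq : (Finset.univ.filter fun j => x j ≠ 0) = (U.filter fun j => x j ≠ 0) := by
      ext j
      simp only [Finset.mem_filter, Finset.mem_univ, true_and]
      constructor
      · intro hxj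
        refine ⟨Finset.mem_compl.mpr fun hjT => hxj (hDvan x hx j hjT), hxj⟩
      · exact fun h => h.2
    unfold wtt at hwx
    rw [heq] at hwx
    exact hwx
  have hrk : 4 - S.card ≤ Module.finrank F (D.map π) := by
    rw [hEfr]
    omega
  have hgb := gries2 h2 (4 - S.card) d hd {a // a ∈ U} (D.map π) hrk hEwt
  rw [Fintype.card_coe] at hgb
  exact ⟨S.card, hScard, by omega⟩

lemma small_n {n : ℕ} (C : Submodule F (Fin n → F))
    (h4 : Module.finrank F C = 4) (hloc : HasLocality C 2) : 6 ≤ n := by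
  by_contra hcon
  push_neg at hcon
  have hn4 : 4 ≤ n := by
    have := Submodule.finrank_le C
    rw [Module.finrank_pi, Fintype.card_fin] at this
    omega
  obtain ⟨S, hiS, hScard, hrec⟩ := hloc ⟨0, by omega⟩
  set i : Fin n := ⟨0, by omega⟩
  have hz := loc_zero hrec
  set V := LinearMap.ker (LinearMap.funLeft F F (Subtype.val : {a // a ∈ S} → Fin n)) with hV
  have hVfr : S.card + Module.finrank F V = n := ker_funLeft_finrank S
  set T := insert i S with hT
  have hTcard : T.card = S.card + 1 := Finset.card_insert_of_notMem hiS
  set W := LinearMap.ker (LinearMap.funLeft F F (Subtype.val : {a // a ∈ T} → Fin n)) with hW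
  have hWfr : T.card + Module.finrank F W = n := ker_funLeft_finrank T
  have hle : C ⊓ V ≤ W := by
    intro x hx
    have hxC : x ∈ C := hx.1
    have hxk : (LinearMap.funLeft F F (Subtype.val : {a // a ∈ S} → Fin n)) x = 0 := hx.2
    have hxV : ∀ u ∈ S, x u = 0 := fun u hu => congrFun hxk ⟨u, hu⟩
    show (LinearMap.funLeft F F (Subtype.val : {a // a ∈ T} → Fin n)) x = 0
    funext u
    rcases Finset.mem_insert.mp u.property with h | h
    · show x u.val = 0
      rw [show u.val = i from h]
      exact hz x hxC hxV
    · exact hxV u.val h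
  have hDfr : Module.finrank F C + Module.finrank F V ≤ n + Module.finrank F (C ⊓ V : Submodule F (Fin n → F)) := by
    have h := Submodule.finrank_sup_add_finrank_inf_eq C V
    have h2' : Module.finrank F (C ⊔ V : Submodule F (Fin n → F)) ≤ n := by
      have := Submodule.finrank_le (C ⊔ V : Submodule F (Fin n → F))
      rw [Module.finrank_pi, Fintype.card_fin] at this
      exact this
    omega
  have heq : C ⊓ V = W := by
    apply Submodule.eq_of_le_of_finrank_le hle
    omega
  -- a standard basis vector in C
  have hTn : T.card < n := by omega
  have hmex : ∃ m : Fin n, m ∉ T := by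
    by_contra h
    push_neg at h
    have : (Finset.univ : Finset (Fin n)) ⊆ T := fun m _ => h m
    have := Finset.card_le_card this
    simp [Fintype.card_fin] at this
    omega
  obtain ⟨m, hm⟩ := hmex
  have hδW : Pi.single m (1:F) ∈ W := by
    show (LinearMap.funLeft F F (Subtype.val : {a // a ∈ T} → Fin n)) (Pi.single m (1:F)) = 0
    funext u
    have hne : u.val ≠ m := fun h => hm (h ▸ u.property)
    simp only [LinearMap.funLeft_apply, Pi.zero_apply]
    exact Pi.single_eq_of_ne hne 1
  have hδC : Pi.single m (1:F) ∈ C := by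
    rw [← heq] at hδW
    exact hδW.1
  obtain ⟨Sm, hmSm, _, hrecm⟩ := hloc m
  have := loc_zero hrecm (Pi.single m (1:F)) hδC (by
    intro j hj
    exact Pi.single_eq_of_ne (fun h => hmSm (by rw [← h]; exact hj)) 1)
  rw [Pi.single_eq_same] at this
  exact one_ne_zero this

end Shorten



section Construction

lemma wtt_comp_equiv {F : Type} [Field F] {ι κ : Type} [Fintype ι] [Fintype κ]
    (e : ι ≃ κ) (y : κ → F) : wtt (fun i => y (e i)) = wtt y := by
  unfold wtt
  apply Finset.card_bij (fun a _ => e a)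
  · intro a ha
    simp only [Finset.mem_filter, Finset.mem_univ, true_and] at ha ⊢
    exact ha
  · intro a _ b _ h
    exact e.injective h
  · intro b hb
    simp only [Finset.mem_filter, Finset.mem_univ, true_and] at hb ⊢
    exact ⟨e.symm b, by simpa using hb, by simp⟩

lemma hamWt_eq_wtt {F : Type} [Field F] {n : ℕ} (c : Fin n → F) : hamWt c = wtt c := rfl

lemma lrc_of_code {ι : Type} [Fintype ι] {n k d r : ℕ} (hn : Fintype.card ι = n)
    (C : Submodule (ZMod 2) (ι → ZMod 2)) (hk : Module.finrank (ZMod 2) C = k)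
    (hw : ∀ c ∈ C, c ≠ 0 → d ≤ wtt c)
    (hloc : ∀ i : ι, ∃ S : Finset ι, i ∉ S ∧ S.card ≤ r ∧
      ∀ c ∈ C, (∀ j ∈ S, c j = 0) → c i = 0) :
    LRCExists 2 n k d r := by
  have e : Fin n ≃ ι := Fintype.equivOfCardEq (by simp [hn])
  set L := LinearEquiv.funCongrLeft (ZMod 2) (ZMod 2) e with hL
  set C' := C.map (L : (ι → ZMod 2) →ₗ[ZMod 2] (Fin n → ZMod 2)) with hC'
  have happ : ∀ (c : ι → ZMod 2) (j : Fin n), L c j = c (e j) := fun c j => rfl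
  have happs : ∀ (z : Fin n → ZMod 2) (a : ι), L.symm z a = z (e.symm a) := fun z a => rfl
  refine ⟨ZMod 2, inferInstance, by simp [Nat.card_eq_fintype_card], C', ⟨?_, ?_⟩, ?_⟩
  · rw [hC', LinearEquiv.finrank_map_eq, hk]
  · rintro y ⟨c, hc, rfl⟩ hy0
    have hc0 : c ≠ 0 := by
      rintro rfl
      simp at hy0
    rw [hamWt_eq_wtt]
    have key : wtt (L c) = wtt c := by
      have : (L c : Fin n → ZMod 2) = fun j => c (e j) := funext fun j => happ c j
      rw [this, wtt_comp_equiv]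
    show d ≤ wtt (L c)
    rw [key]
    exact hw c hc hc0
  · intro i
    obtain ⟨S, hiS, hScard, hz⟩ := hloc (e i)
    refine ⟨S.image e.symm, ?_, le_trans Finset.card_image_le hScard, ?_⟩
    · intro hmem
      obtain ⟨a, haS, hai⟩ := Finset.mem_image.mp hmem
      have : a = e i := by
        have := congrArg e hai
        simpa using this
      exact hiS (this ▸ haS)
    · intro y1 hy1 y2 hy2 hagree
      have hzmem : y1 - y2 ∈ C' := Submodule.sub_mem C' hy1 hy2
      obtain ⟨c, hc, hLc⟩ := hzmem
      have hcs : c = L.symm (y1 - y2) := by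
        rw [← hLc]
        simp
      have hvan : ∀ a ∈ S, c a = 0 := by
        intro a haS
        rw [hcs, happs]
        have : e.symm a ∈ S.image e.symm := Finset.mem_image_of_mem _ haS
        have h := hagree (e.symm a) this
        simp [Pi.sub_apply, h]
      have := hz c hc hvan
      rw [hcs, happs] at this
      simp only [Equiv.symm_apply_apply, Pi.sub_apply] at this
      exact sub_eq_zero.mp this

def genMap {ι : Type} [Fintype ι] (Gf : Fin 4 → ι → ZMod 2) :
    (Fin 4 → ZMod 2) →ₗ[ZMod 2] (ι → ZMod 2) where
  toFun x := fun j => ∑ i, x i * Gf i j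
  map_add' x y := by
    funext j
    simp [add_mul, Finset.sum_add_distrib]
  map_smul' m x := by
    funext j
    simp [Finset.mul_sum, mul_assoc]

def col (v : Fin 15) (i : Fin 4) : ZMod 2 := if Nat.testBit (v.val+1) i.val then 1 else 0

lemma col_pairs : ∀ v : Fin 15, ∃ a b : Fin 15, a ≠ v ∧ b ≠ v ∧ a ≠ b ∧
    ∀ i, col v i = col a i + col b i := by decide

lemma col_eight : ∀ x : Fin 4 → ZMod 2, x ≠ 0 →
    (Finset.univ.filter fun v : Fin 15 => (∑ i, x i * col v i) ≠ 0).card = 8 := by decide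

lemma card_filter_fst {α β : Type} [Fintype α] [Fintype β] (p : α → Prop) [DecidablePred p] :
    (Finset.univ.filter fun x : α × β => p x.1).card =
      (Finset.univ.filter p).card * Fintype.card β := by
  rw [Finset.card_filter, Fintype.sum_prod_type]
  trans (∑ x : α, (if p x then 1 else 0) * Fintype.card β)
  · apply Finset.sum_congr rfl
    intro a _
    trans (∑ _y : β, if p a then 1 else 0)
    · rfl
    · rw [Finset.sum_const, Finset.card_univ, smul_eq_mul, mul_comm]
  · rw [← Finset.sum_mul, ← Finset.card_filter]

lemma block (n₀ d₀ : ℕ) (G : Fin 4 → Fin n₀ → ZMod 2)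
    (hinj : ∀ x : Fin 4 → ZMod 2, (∀ j, (∑ i, x i * G i j) = 0) → x = 0)
    (hw : ∀ x : Fin 4 → ZMod 2, x ≠ 0 →
      d₀ ≤ (Finset.univ.filter fun j => (∑ i, x i * G i j) ≠ 0).card)
    (hr : ∀ j, ∃ a b : Fin n₀, a ≠ j ∧ b ≠ j ∧ a ≠ b ∧ ∀ i, G i j = G i a + G i b)
    (t d : ℕ) (hd : d ≤ d₀ + 8 * t) : LRCExists 2 (n₀ + 15 * t) 4 d 2 := by
  set ι := (Fin n₀ ⊕ (Fin 15 × Fin t)) with hι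
  set Gf : Fin 4 → ι → ZMod 2 := fun i => Sum.elim (G i) (fun p => col p.1 i) with hGf
  set M := genMap Gf with hM
  have happ : ∀ (x : Fin 4 → ZMod 2) (j : ι), M x j = ∑ i, x i * Gf i j := fun x j => rfl
  have hMinj : Function.Injective M := by
    rw [← LinearMap.ker_eq_bot]
    rw [LinearMap.ker_eq_bot']
    intro x hx
    apply hinj
    intro j
    exact congrFun hx (Sum.inl j)
  apply lrc_of_code (ι := ι) (by simp [hι]) (LinearMap.range M)
  · rw [LinearMap.finrank_range_of_inj hMinj, Module.finrank_pi, Fintype.card_fin]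
  · rintro c ⟨x, rfl⟩ hc0
    have hx0 : x ≠ 0 := by rintro rfl; simp at hc0
    have hbase : wtt (M x) =
        (Finset.univ.filter fun j : Fin n₀ => M x (Sum.inl j) ≠ 0).card +
        (Finset.univ.filter fun q : Fin 15 × Fin t => M x (Sum.inr q) ≠ 0).card := by
      unfold wtt
      rw [← Finset.card_toLeft_add_card_toRight]
      congr 1
      · apply congrArg Finset.card
        ext a
        simp
      · apply congrArg Finset.card
        ext a
        simp
    have h1 : (Finset.univ.filter fun j : Fin n₀ => M x (Sum.inl j) ≠ 0).card =
        (Finset.univ.filter fun j : Fin n₀ => (∑ i, x i * G i j) ≠ 0).card :=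
      fcc fun j => Iff.rfl
    have h2 : (Finset.univ.filter fun q : Fin 15 × Fin t => M x (Sum.inr q) ≠ 0).card =
        (Finset.univ.filter fun q : Fin 15 × Fin t => (∑ i, x i * col q.1 i) ≠ 0).card :=
      fcc fun q => Iff.rfl
    have h3 : (Finset.univ.filter fun q : Fin 15 × Fin t => (∑ i, x i * col q.1 i) ≠ 0).card =
        (Finset.univ.filter fun v : Fin 15 => (∑ i, x i * col v i) ≠ 0).card * t := by
      rw [card_filter_fst (fun v : Fin 15 => (∑ i, x i * col v i) ≠ 0), Fintype.card_fin]
    have h4 := col_eight x hx0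
    have h5 := hw x hx0
    rw [hbase, h1, h2, h3, h4]
    omega
  · intro i
    match i with
    | Sum.inl j =>
      obtain ⟨a, b, ha, hb, hab, hcols⟩ := hr j
      refine ⟨{Sum.inl a, Sum.inl b}, ?_, ?_, ?_⟩
      · simp only [Finset.mem_insert, Finset.mem_singleton]
        push_neg
        exact ⟨fun h => ha (Sum.inl_injective h).symm, fun h => hb (Sum.inl_injective h).symm⟩
      · exact le_trans (Finset.card_insert_le _ _) (by simp)
      · rintro c ⟨x, rfl⟩ hvan
        have h1 : M x (Sum.inl a) = 0 := hvan _ (by simp)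
        have h2 : M x (Sum.inl b) = 0 := hvan _ (by simp)
        have : M x (Sum.inl j) = M x (Sum.inl a) + M x (Sum.inl b) := by
          rw [happ, happ, happ]
          have : ∀ i', x i' * Gf i' (Sum.inl j) =
              x i' * Gf i' (Sum.inl a) + x i' * Gf i' (Sum.inl b) := by
            intro i'
            have : Gf i' (Sum.inl j) = Gf i' (Sum.inl a) + Gf i' (Sum.inl b) := hcols i'
            rw [this, mul_add]
          rw [Finset.sum_congr rfl fun i' _ => this i', Finset.sum_add_distrib]
        rw [this, h1, h2, add_zero]
    | Sum.inr p =>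
      obtain ⟨v, s⟩ := p
      obtain ⟨a, b, ha, hb, hab, hcols⟩ := col_pairs v
      refine ⟨{Sum.inr (a, s), Sum.inr (b, s)}, ?_, ?_, ?_⟩
      · simp only [Finset.mem_insert, Finset.mem_singleton]
        push_neg
        refine ⟨fun h => ha ?_, fun h => hb ?_⟩
        · exact (congrArg Prod.fst (Sum.inr_injective h)).symm
        · exact (congrArg Prod.fst (Sum.inr_injective h)).symm
      · exact le_trans (Finset.card_insert_le _ _) (by simp)
      · rintro c ⟨x, rfl⟩ hvan
        have h1 : M x (Sum.inr (a, s)) = 0 := hvan _ (by simp)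
        have h2 : M x (Sum.inr (b, s)) = 0 := hvan _ (by simp)
        have : M x (Sum.inr (v, s)) = M x (Sum.inr (a, s)) + M x (Sum.inr (b, s)) := by
          rw [happ, happ, happ]
          have : ∀ i', x i' * Gf i' (Sum.inr (v, s)) =
              x i' * Gf i' (Sum.inr (a, s)) + x i' * Gf i' (Sum.inr (b, s)) := by
            intro i'
            have : Gf i' (Sum.inr (v, s)) = Gf i' (Sum.inr (a, s)) + Gf i' (Sum.inr (b, s)) :=
              hcols i'
            rw [this, mul_add]
          rw [Finset.sum_congr rfl fun i' _ => this i', Finset.sum_add_distrib]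
        rw [this, h1, h2, add_zero]

end Construction


section Bases

def idx6 : Fin 6 → Fin 15 := ![0,1,3,7,2,11]

def A6 : Fin 4 → Fin 6 → ZMod 2 := fun i j => col (idx6 j) i

set_option maxHeartbeats 1000000 in
lemma EX6 : ∀ t d : ℕ, d ≤ 2 + 8 * t → LRCExists 2 (6 + 15 * t) 4 d 2 :=
  block 6 2 A6 (by decide) (by decide) (by decide)

def idx8 : Fin 8 → Fin 15 := ![0,1,3,7,2,11,4,9]

def A8 : Fin 4 → Fin 8 → ZMod 2 := fun i j => col (idx8 j) i

set_option maxHeartbeats 1000000 in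
lemma EX8 : ∀ t d : ℕ, d ≤ 3 + 8 * t → LRCExists 2 (8 + 15 * t) 4 d 2 :=
  block 8 3 A8 (by decide) (by decide) (by decide)

def idx9 : Fin 9 → Fin 15 := ![0,1,3,7,6,10,12,13,2]

def A9 : Fin 4 → Fin 9 → ZMod 2 := fun i j => col (idx9 j) i

set_option maxHeartbeats 1000000 in
lemma EX9 : ∀ t d : ℕ, d ≤ 4 + 8 * t → LRCExists 2 (9 + 15 * t) 4 d 2 :=
  block 9 4 A9 (by decide) (by decide) (by decide)

def idx11 : Fin 11 → Fin 15 := ![4,5,6,7,8,9,10,11,12,13,14]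

def A11 : Fin 4 → Fin 11 → ZMod 2 := fun i j => col (idx11 j) i

set_option maxHeartbeats 1000000 in
lemma EX11 : ∀ t d : ℕ, d ≤ 5 + 8 * t → LRCExists 2 (11 + 15 * t) 4 d 2 :=
  block 11 5 A11 (by decide) (by decide) (by decide)

def idx12 : Fin 12 → Fin 15 := ![3,4,5,6,7,8,9,10,11,12,13,14]

def A12 : Fin 4 → Fin 12 → ZMod 2 := fun i j => col (idx12 j) i

set_option maxHeartbeats 1000000 in
lemma EX12 : ∀ t d : ℕ, d ≤ 6 + 8 * t → LRCExists 2 (12 + 15 * t) 4 d 2 :=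
  block 12 6 A12 (by decide) (by decide) (by decide)

def idx14 : Fin 14 → Fin 15 := ![1,2,3,4,5,6,7,8,9,10,11,12,13,14]

def A14 : Fin 4 → Fin 14 → ZMod 2 := fun i j => col (idx14 j) i

set_option maxHeartbeats 1000000 in
lemma EX14 : ∀ t d : ℕ, d ≤ 7 + 8 * t → LRCExists 2 (14 + 15 * t) 4 d 2 :=
  block 14 7 A14 (by decide) (by decide) (by decide)

def idx15 : Fin 15 → Fin 15 := ![0,1,2,3,4,5,6,7,8,9,10,11,12,13,14]

def A15 : Fin 4 → Fin 15 → ZMod 2 := fun i j => col (idx15 j) i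

set_option maxHeartbeats 1000000 in
lemma EX15 : ∀ t d : ℕ, d ≤ 8 + 8 * t → LRCExists 2 (15 + 15 * t) 4 d 2 :=
  block 15 8 A15 (by decide) (by decide) (by decide)

def idx19 : Fin 19 → Fin 15 := ![0,1,2,3,4,5,6,7,8,9,10,11,12,13,14,0,1,3,7]

def A19 : Fin 4 → Fin 19 → ZMod 2 := fun i j => col (idx19 j) i

set_option maxHeartbeats 1000000 in
lemma EX19 : ∀ t d : ℕ, d ≤ 9 + 8 * t → LRCExists 2 (19 + 15 * t) 4 d 2 :=
  block 19 9 A19 (by decide) (by decide) (by decide)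

def idx20 : Fin 20 → Fin 15 := ![0,1,2,3,4,5,6,7,8,9,10,11,12,13,14,0,1,3,7,14]

def A20 : Fin 4 → Fin 20 → ZMod 2 := fun i j => col (idx20 j) i

set_option maxHeartbeats 1000000 in
lemma EX20 : ∀ t d : ℕ, d ≤ 10 + 8 * t → LRCExists 2 (20 + 15 * t) 4 d 2 :=
  block 20 10 A20 (by decide) (by decide) (by decide)

def idx22 : Fin 22 → Fin 15 := ![0,1,2,3,4,5,6,7,8,9,10,11,12,13,14,0,1,3,7,13,12,10]

def A22 : Fin 4 → Fin 22 → ZMod 2 := fun i j => col (idx22 j) i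

set_option maxHeartbeats 1000000 in
lemma EX22 : ∀ t d : ℕ, d ≤ 11 + 8 * t → LRCExists 2 (22 + 15 * t) 4 d 2 :=
  block 22 11 A22 (by decide) (by decide) (by decide)

def idx23 : Fin 23 → Fin 15 := ![0,1,2,3,4,5,6,7,8,9,10,11,12,13,14,0,1,3,7,6,10,12,13]

def A23 : Fin 4 → Fin 23 → ZMod 2 := fun i j => col (idx23 j) i

set_option maxHeartbeats 1000000 in
lemma EX23 : ∀ t d : ℕ, d ≤ 12 + 8 * t → LRCExists 2 (23 + 15 * t) 4 d 2 :=
  block 23 12 A23 (by decide) (by decide) (by decide)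

end Bases


section Assemble

lemma gsum4 (d : ℕ) : gsum 4 d = d + ((d+1)/2 + (((d+1)/2+1)/2 + ((((d+1)/2+1)/2+1)/2 + 0))) := rfl

lemma gsum3 (d : ℕ) : gsum 3 d = d + ((d+1)/2 + (((d+1)/2+1)/2 + 0)) := rfl

lemma gsum2 (d : ℕ) : gsum 2 d = d + ((d+1)/2 + 0) := rfl

lemma lower_gries {d n : ℕ} (hd : 1 ≤ d) (h : LRCExists 2 n 4 d 2) : gsum 4 d ≤ n := by
  obtain ⟨F, hF, h2, C, ⟨hrk, hw⟩, hloc⟩ := h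
  have := gries2 h2 4 d hd (Fin n) C (le_of_eq hrk.symm)
    (fun c hc h0 => by rw [← hamWt_eq_wtt]; exact hw c hc h0)
  simpa [Fintype.card_fin] using this

lemma lower_shorten {d n : ℕ} (hd : 1 ≤ d) (h : LRCExists 2 n 4 d 2) :
    ∃ s : ℕ, s ≤ 2 ∧ s + 1 + gsum (4 - s) d ≤ n := by
  obtain ⟨F, hF, h2, C, ⟨hrk, hw⟩, hloc⟩ := h
  exact shorten h2 C hrk hd (fun c hc h0 => by rw [← hamWt_eq_wtt]; exact hw c hc h0) hloc

lemma lower_small {d n : ℕ} (h : LRCExists 2 n 4 d 2) : 6 ≤ n := by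
  obtain ⟨F, hF, h2, C, ⟨hrk, hw⟩, hloc⟩ := h
  exact small_n C hrk hloc

end Assemble

theorem n2_k4_r2 :
    (∀ t : ℕ, nLRC 2 4 (5 + 8 * t) 2 = 11 + 15 * t ∧ nLRC 2 4 (6 + 8 * t) 2 = 12 + 15 * t ∧
        nLRC 2 4 (7 + 8 * t) 2 = 14 + 15 * t ∧ nLRC 2 4 (8 + 8 * t) 2 = 15 + 15 * t ∧
        nLRC 2 4 (9 + 8 * t) 2 = 19 + 15 * t ∧ nLRC 2 4 (10 + 8 * t) 2 = 20 + 15 * t ∧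
        nLRC 2 4 (11 + 8 * t) 2 = 22 + 15 * t ∧ nLRC 2 4 (12 + 8 * t) 2 = 23 + 15 * t) ∧
    nLRC 2 4 1 2 = 6 ∧
    nLRC 2 4 2 2 = 6 ∧
    nLRC 2 4 3 2 = 8 ∧
    nLRC 2 4 4 2 = 9 := by
  have big : ∀ (n₀ d₀ : ℕ), 1 ≤ d₀ → (∀ t d : ℕ, d ≤ d₀ + 8 * t → LRCExists 2 (n₀ + 15 * t) 4 d 2) →
      ∀ t : ℕ, gsum 4 (d₀ + 8 * t) = n₀ + 15 * t → nLRC 2 4 (d₀ + 8 * t) 2 = n₀ + 15 * t := by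
    intro n₀ d₀ hd₀ hex t hg
    apply le_antisymm
    · exact Nat.sInf_le (hex t (d₀ + 8 * t) le_rfl)
    · refine le_csInf ⟨n₀ + 15 * t, hex t (d₀ + 8 * t) le_rfl⟩ ?_
      intro m hm
      have h1 : 1 ≤ d₀ + 8 * t := by omega
      have := lower_gries h1 hm
      omega
  have smallmem : ∀ d : ℕ, d ≤ 2 → LRCExists 2 6 4 d 2 := by
    intro d hd
    have := EX6 0 d (by omega)
    simpa using this
  refine ⟨?_, ?_, ?_, ?_, ?_⟩
  · intro t
    refine ⟨?_, ?_, ?_, ?_, ?_, ?_, ?_, ?_⟩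
    · exact big 11 5 (by omega) EX11 t (by rw [gsum4]; omega)
    · exact big 12 6 (by omega) EX12 t (by rw [gsum4]; omega)
    · exact big 14 7 (by omega) EX14 t (by rw [gsum4]; omega)
    · exact big 15 8 (by omega) EX15 t (by rw [gsum4]; omega)
    · exact big 19 9 (by omega) EX19 t (by rw [gsum4]; omega)
    · exact big 20 10 (by omega) EX20 t (by rw [gsum4]; omega)
    · exact big 22 11 (by omega) EX22 t (by rw [gsum4]; omega)
    · exact big 23 12 (by omega) EX23 t (by rw [gsum4]; omega)
  · -- d = 1
    apply le_antisymm
    · exact Nat.sInf_le (smallmem 1 (by omega))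
    · exact le_csInf ⟨6, smallmem 1 (by omega)⟩ fun m hm => lower_small hm
  · -- d = 2
    apply le_antisymm
    · exact Nat.sInf_le (smallmem 2 le_rfl)
    · refine le_csInf ⟨6, smallmem 2 le_rfl⟩ ?_
      intro m hm
      obtain ⟨s, hs2, hle⟩ := lower_shorten (by omega) hm
      interval_cases s
      · rw [show (4:ℕ) - 0 = 4 from rfl, gsum4] at hle; omega
      · rw [show (4:ℕ) - 1 = 3 from rfl, gsum3] at hle; omega
      · rw [show (4:ℕ) - 2 = 2 from rfl, gsum2] at hle; omega
  · -- d = 3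
    apply le_antisymm
    · exact Nat.sInf_le (by simpa using EX8 0 3 (by omega))
    · refine le_csInf ⟨8, by simpa using EX8 0 3 (by omega)⟩ ?_
      intro m hm
      obtain ⟨s, hs2, hle⟩ := lower_shorten (by omega) hm
      interval_cases s
      · rw [show (4:ℕ) - 0 = 4 from rfl, gsum4] at hle; omega
      · rw [show (4:ℕ) - 1 = 3 from rfl, gsum3] at hle; omega
      · rw [show (4:ℕ) - 2 = 2 from rfl, gsum2] at hle; omega
  · -- d = 4
    apply le_antisymm
    · exact Nat.sInf_le (by simpa using EX9 0 4 (by omega))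
    · refine le_csInf ⟨9, by simpa using EX9 0 4 (by omega)⟩ ?_
      intro m hm
      obtain ⟨s, hs2, hle⟩ := lower_shorten (by omega) hm
      interval_cases s
      · rw [show (4:ℕ) - 0 = 4 from rfl, gsum4] at hle; omega
      · rw [show (4:ℕ) - 1 = 3 from rfl, gsum3] at hle; omega
      · rw [show (4:ℕ) - 2 = 2 from rfl, gsum2] at hle; omega
end

section
/- Over the binary field, n_2(3,1,1) = n_2(3,2,1) = 6, n_2(3,3,1) = n_2(3,4,1) = 8, n_2(3,5,1) = 11, n_2(3,6,1) = 12, n_2(3,7,1) = 14, and n_2(3,d,1) = n_2(3,d) for all d ≥ 8. -/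
open scoped Classical

/-!
The rows of a generator matrix of a binary `[n,3,d]` code are `n` points of `𝔽₂³`, and all
that matters is the multiplicity `m w` of each point `w`: the codeword `G x` has weight
`∑_{w ⬝ x ≠ 0} m w`, so the minimum distance condition is seven linear inequalities in the
multiplicities of the seven nonzero points, and the length is `∑ m w`. Locality `1` means
precisely that no nonzero point occurs exactly once. The lower bounds are then integer linear
arithmetic (for `d ≥ 8` this is the Griesmer bound), and they are attained by multiplicities
that depend only on the number of ones in `w`.
-/

open Finset Matrix

section GeneratorMatrix

variable {F : Type} [Field F] {n k d : ℕ}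

theorem Submodule.exists_mulVecLin_eq (C : Submodule F (Fin n → F))
    (hC : Module.finrank F C = k) :
    ∃ M : Matrix (Fin n) (Fin k) F,
      Function.Injective M.mulVecLin ∧ LinearMap.range M.mulVecLin = C := by
  let e : (Fin k → F) ≃ₗ[F] C := LinearEquiv.ofFinrankEq _ _ (by simp [hC])
  refine ⟨LinearMap.toMatrix' (C.subtype ∘ₗ e.toLinearMap), ?_, ?_⟩ <;>
    rw [← Matrix.toLin'_apply', Matrix.toLin'_toMatrix']
  · exact Subtype.val_injective.comp e.injective
  · rw [LinearMap.range_comp, LinearEquiv.range, Submodule.map_top, Submodule.range_subtype]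

theorem Matrix.isCode_range_mulVecLin (M : Matrix (Fin n) (Fin k) F) (hd : 0 < d)
    (hM : ∀ x ≠ 0, d ≤ hamWt (M *ᵥ x)) : IsCode k d (LinearMap.range M.mulVecLin) := by
  have hinj : Function.Injective M.mulVecLin := by
    rw [← LinearMap.ker_eq_bot, LinearMap.ker_eq_bot']
    intro x hx
    by_contra hx0
    have := (hM x hx0).trans_lt' hd
    simp_all [hamWt]
  refine ⟨by rw [LinearMap.finrank_range_of_inj hinj, Module.finrank_fin_fun], ?_⟩
  rintro _ ⟨x, rfl⟩ hx
  exact hM x (by rintro rfl; exact hx (map_zero _))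

theorem Matrix.hasLocality_range_mulVecLin (M : Matrix (Fin n) (Fin k) F)
    (hM : ∀ i, M i = 0 ∨ ∃ j ≠ i, M j = M i) :
    HasLocality (LinearMap.range M.mulVecLin) 1 := by
  intro i
  rcases hM i with hi | ⟨j, hji, hj⟩
  · refine ⟨∅, by simp, by simp, ?_⟩
    rintro _ ⟨x, rfl⟩ _ ⟨y, rfl⟩ -
    simp [Matrix.mulVec, hi]
  · refine ⟨{j}, by simpa using hji.symm, by simp, ?_⟩
    rintro _ ⟨x, rfl⟩ _ ⟨y, rfl⟩ hxy
    simpa [Matrix.mulVec, hj] using hxy j (mem_singleton_self j)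

theorem HasLocality.eq_zero_or_eq_mul {C : Submodule F (Fin n → F)} (hC : HasLocality C 1)
    (i : Fin n) : (∀ c ∈ C, c i = 0) ∨ ∃ j ≠ i, ∃ a : F, ∀ c ∈ C, c i = a * c j := by
  obtain ⟨S, hiS, hS, hrec⟩ := hC i
  have hzero : ∀ c ∈ C, (∀ j ∈ S, c j = 0) → c i = 0 := fun c hc h0 =>
    hrec c hc 0 C.zero_mem h0
  rcases S.eq_empty_or_nonempty with rfl | ⟨j, hjS⟩
  · exact Or.inl fun c hc => hzero c hc (by simp)
  obtain rfl : S = {j} :=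
    eq_singleton_iff_unique_mem.mpr ⟨hjS, fun l hl => card_le_one.mp hS l hl j hjS⟩
  by_cases hj : ∀ c ∈ C, c j = 0
  · exact Or.inl fun c hc => hzero c hc (by simpa using hj c hc)
  obtain ⟨c₀, hc₀, hc₀j⟩ : ∃ c₀ ∈ C, c₀ j ≠ 0 := by simpa using hj
  refine Or.inr ⟨j, fun h => hiS (by simp [h]), c₀ i / c₀ j, fun c hc => ?_⟩
  -- `c - (c j / c₀ j) • c₀` vanishes at `j`, hence at `i`
  have := hzero (c - (c j / c₀ j) • c₀) (C.sub_mem hc (C.smul_mem _ hc₀)) (by simp [hc₀j])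
  simp only [Pi.sub_apply, Pi.smul_apply, smul_eq_mul, sub_eq_zero] at this
  rw [this]
  ring

theorem Matrix.row_eq_smul_of_mulVec {M : Matrix (Fin n) (Fin k) F} {i j : Fin n} {a : F}
    (h : ∀ x, (M *ᵥ x) i = a * (M *ᵥ x) j) : M i = a • M j := by
  ext t
  simpa [mulVec_single_one] using h (Pi.single t 1)

theorem hamWt_comp_ringEquiv {K : Type} [Field K] (e : F ≃+* K) (c : Fin n → F) :
    hamWt (e ∘ c) = hamWt c := by
  simp [hamWt]

theorem exists_binary_generator (hF : Nat.card F = 2) {C : Submodule F (Fin n → F)}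
    (hC : IsCode k d C) :
    ∃ B : Fin n → Fin k → ZMod 2, (∀ x ≠ 0, d ≤ hamWt (of B *ᵥ x)) ∧
      (HasLocality C 1 → ∀ i, B i = 0 ∨ ∃ j ≠ i, B j = B i) := by
  have : Fintype F := @Fintype.ofFinite F (Nat.finite_of_card_ne_zero (by omega))
  let e : ZMod 2 ≃+* F :=
    ZMod.ringEquivOfPrime F Nat.prime_two (by rwa [← Nat.card_eq_fintype_card])
  obtain ⟨M, hinj, rfl⟩ := C.exists_mulVecLin_eq hC.1
  set B : Fin n → Fin k → ZMod 2 := fun i t => e.symm (M i t)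
  have hcodeword : ∀ x, M *ᵥ (e ∘ x) = e ∘ (of B *ᵥ x) := fun x => by
    ext i
    simp [B, Matrix.mulVec, dotProduct]
  have hrow : ∀ i j (a : F), M i = a • M j → B i = e.symm a • B j := fun i j a h => by
    ext t
    simp [B, h]
  refine ⟨B, fun x hx => ?_, fun hloc i => ?_⟩
  · rw [← hamWt_comp_ringEquiv e, ← hcodeword]
    refine hC.2 _ ⟨_, rfl⟩ fun h0 => hx (funext fun t => e.injective ?_)
    simpa using congrFun (hinj (h0.trans (map_zero _).symm)) t
  rcases hloc.eq_zero_or_eq_mul i with h0 | ⟨j, hji, a, ha⟩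
  · left
    have := hrow i i 0 (row_eq_smul_of_mulVec fun x => by simpa using h0 _ ⟨x, rfl⟩)
    simpa using this
  · rw [hrow i j a (row_eq_smul_of_mulVec fun x => ha _ ⟨x, rfl⟩)]
    rcases (by decide : ∀ z : ZMod 2, z = 0 ∨ z = 1) (e.symm a) with h | h <;> rw [h]
    · exact Or.inl (zero_smul _ _)
    · exact Or.inr ⟨j, hji, (one_smul _ _).symm⟩

end GeneratorMatrix

section Multiplicity

variable {ι X : Type*} [Fintype ι] [DecidableEq X]

def mult (v : ι → X) (w : X) : ℕ := #{i | v i = w}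

theorem card_filter_eq_sum_mult [Fintype X] (v : ι → X) (p : X → Prop) [DecidablePred p] :
    #{i | p (v i)} = ∑ w with p w, mult v w := by
  rw [card_eq_sum_card_fiberwise (f := v) (t := univ.filter p) fun i hi => by simpa using hi]
  refine sum_congr rfl fun w hw => ?_
  rw [filter_filter, mult]
  congr 1
  ext i
  simp only [mem_filter, mem_univ, true_and, and_iff_right_iff_imp]
  rintro rfl
  exact (mem_filter.1 hw).2

theorem sum_mult [Fintype X] (v : ι → X) : ∑ w, mult v w = Fintype.card ι := by
  simpa using (card_filter_eq_sum_mult v fun _ => True).symm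

theorem forall_eq_or_exists_ne_iff_mult_ne_one (v : ι → X) (a : X) :
    (∀ i, v i = a ∨ ∃ j ≠ i, v j = v i) ↔ ∀ w ≠ a, mult v w ≠ 1 := by
  constructor
  · rintro h w hw hone
    obtain ⟨i, hi⟩ := card_eq_one.mp hone
    have hfib : ∀ j, v j = w ↔ j = i := fun j => by simpa using congrArg (j ∈ ·) hi
    rcases h i with hia | ⟨j, hji, hj⟩
    · exact hw (((hfib i).2 rfl).symm.trans hia)
    · exact hji ((hfib j).1 (hj.trans ((hfib i).2 rfl)))
  · intro h i
    refine or_iff_not_imp_left.2 fun hia => ?_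
    have : 1 < mult v (v i) := lt_of_le_of_ne (card_pos.2 ⟨i, by simp⟩) (h _ hia).symm
    obtain ⟨j, hj, hji⟩ := (one_lt_card_iff_nontrivial.1 this).exists_ne i
    exact ⟨j, hji, (mem_filter.1 hj).2⟩

theorem exists_mult_eq [Fintype X] (m : X → ℕ) : ∃ v : Fin (∑ w, m w) → X, mult v = m := by
  let σ : (Σ w, Fin (m w)) ≃ Fin (∑ w, m w) := Fintype.equivFinOfCardEq (by simp)
  refine ⟨fun i => (σ.symm i).1, funext fun w => ?_⟩
  have hfib : ({p | p.1 = w} : Finset (Σ w, Fin (m w))) = ({w} : Finset X).sigma fun _ => univ := by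
    ext ⟨u, t⟩
    simp
  calc mult (fun i => (σ.symm i).1) w = #{p : Σ w, Fin (m w) | p.1 = w} :=
        card_equiv σ.symm (by simp)
    _ = m w := by rw [hfib, card_sigma]; simp

end Multiplicity

section BinaryMultiplicities

variable {k n d : ℕ}

def codeWeight (m : (Fin k → ZMod 2) → ℕ) (x : Fin k → ZMod 2) : ℕ :=
  ∑ w with w ⬝ᵥ x ≠ 0, m w

theorem hamWt_mulVec_eq_codeWeight (B : Fin n → Fin k → ZMod 2) (x : Fin k → ZMod 2) :
    hamWt (of B *ᵥ x) = codeWeight (mult B) x := by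
  rw [codeWeight, ← card_filter_eq_sum_mult, hamWt]
  congr

theorem exists_mult_of_isCode {F : Type} [Field F] (hF : Nat.card F = 2)
    {C : Submodule F (Fin n → F)} (hC : IsCode k d C) :
    ∃ m : (Fin k → ZMod 2) → ℕ, ∑ w, m w = n ∧ (∀ x ≠ 0, d ≤ codeWeight m x) ∧
      (HasLocality C 1 → ∀ w ≠ 0, m w ≠ 1) := by
  obtain ⟨B, hdist, hloc⟩ := exists_binary_generator hF hC
  refine ⟨mult B, by simp [sum_mult], fun x hx => ?_, fun h => ?_⟩
  · rw [← hamWt_mulVec_eq_codeWeight]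
    exact hdist x hx
  · rw [← forall_eq_or_exists_ne_iff_mult_ne_one]
    exact hloc h

theorem lrcExists_of_mult (m : (Fin k → ZMod 2) → ℕ) (hd : 0 < d)
    (hdist : ∀ x ≠ 0, d ≤ codeWeight m x) (hloc : ∀ w ≠ 0, m w ≠ 1) :
    LRCExists 2 (∑ w, m w) k d 1 := by
  obtain ⟨B, hB⟩ := exists_mult_eq m
  refine ⟨ZMod 2, inferInstance, by simp, _, (of B).isCode_range_mulVecLin hd fun x hx => ?_,
    (of B).hasLocality_range_mulVecLin ?_⟩
  · rw [hamWt_mulVec_eq_codeWeight, hB]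
    exact hdist x hx
  · exact (forall_eq_or_exists_ne_iff_mult_ne_one B 0).2 (by rwa [hB])

end BinaryMultiplicities

theorem univ_cube : (univ : Finset (Fin 3 → ZMod 2)) =
    {![0,0,0], ![1,0,0], ![0,1,0], ![0,0,1], ![1,1,0], ![1,0,1], ![0,1,1], ![1,1,1]} := by
  decide

theorem sum_cube {M : Type*} [AddCommMonoid M] (f : (Fin 3 → ZMod 2) → M) :
    ∑ w, f w = f ![0,0,0] + f ![1,0,0] + f ![0,1,0] + f ![0,0,1] + f ![1,1,0] + f ![1,0,1]
      + f ![0,1,1] + f ![1,1,1] := by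
  rw [univ_cube, sum_insert (by decide), sum_insert (by decide), sum_insert (by decide),
    sum_insert (by decide), sum_insert (by decide), sum_insert (by decide), sum_insert (by decide),
    sum_singleton]
  simp only [add_assoc]

theorem forall_cube {P : (Fin 3 → ZMod 2) → Prop} : (∀ x, P x) ↔
    P ![0,0,0] ∧ P ![1,0,0] ∧ P ![0,1,0] ∧ P ![0,0,1] ∧ P ![1,1,0] ∧ P ![1,0,1] ∧ P ![0,1,1] ∧
      P ![1,1,1] := by
  have h : (∀ x, P x) ↔ ∀ x ∈ (univ : Finset (Fin 3 → ZMod 2)), P x := by simp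
  simp only [h, univ_cube, forall_mem_insert, mem_singleton, forall_eq]

theorem le_codeWeight_iff {m : (Fin 3 → ZMod 2) → ℕ} {d : ℕ} :
    (∀ x ≠ 0, d ≤ codeWeight m x) ↔
      d ≤ m ![1,0,0] + m ![1,1,0] + m ![1,0,1] + m ![1,1,1] ∧
      d ≤ m ![0,1,0] + m ![1,1,0] + m ![0,1,1] + m ![1,1,1] ∧
      d ≤ m ![0,0,1] + m ![1,0,1] + m ![0,1,1] + m ![1,1,1] ∧
      d ≤ m ![1,0,0] + m ![0,1,0] + m ![1,0,1] + m ![0,1,1] ∧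
      d ≤ m ![1,0,0] + m ![0,0,1] + m ![1,1,0] + m ![0,1,1] ∧
      d ≤ m ![0,1,0] + m ![0,0,1] + m ![1,1,0] + m ![1,0,1] ∧
      d ≤ m ![1,0,0] + m ![0,1,0] + m ![0,0,1] + m ![1,1,1] := by
  simp +decide [forall_cube, codeWeight, sum_filter, sum_cube, dotProduct, Fin.sum_univ_three]

theorem Nat.ceil_div_eq_add_pred_div {K : Type*} [Semifield K] [LinearOrder K]
    [IsStrictOrderedRing K] [FloorSemiring K] (a b : ℕ) (hb : 0 < b) :
    ⌈(a / b : K)⌉₊ = (a + b - 1) / b := by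
  apply le_antisymm
  · rw [Nat.ceil_le, div_le_iff₀ (by positivity)]
    have := Nat.lt_div_mul_add (a := a + b - 1) hb
    exact_mod_cast (show a ≤ (a + b - 1) / b * b by omega)
  · rw [Nat.div_le_iff_le_mul_add_pred hb]
    have : (a : K) ≤ b * ⌈(a / b : K)⌉₊ := by
      rw [← div_le_iff₀' (by positivity)]
      exact Nat.le_ceil _
    have : a ≤ b * ⌈(a / b : K)⌉₊ := by exact_mod_cast this
    omega

theorem griesmer_two_three (d : ℕ) : griesmer 2 3 d = d + (d + 1) / 2 + (d + 3) / 4 := by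
  have h2 := Nat.ceil_div_eq_add_pred_div (K := ℚ) d 2 two_pos
  have h4 := Nat.ceil_div_eq_add_pred_div (K := ℚ) d 4 four_pos
  push_cast at h2 h4
  norm_num [griesmer, sum_range_succ, h2, h4]

theorem griesmer_le_sum {m : (Fin 3 → ZMod 2) → ℕ} {d : ℕ}
    (hm : ∀ x ≠ 0, d ≤ codeWeight m x) : griesmer 2 3 d ≤ ∑ w, m w := by
  rw [le_codeWeight_iff] at hm
  rw [griesmer_two_three, sum_cube]
  omega

theorem CodeExists.griesmer_le {n d : ℕ} (h : CodeExists 2 n 3 d) : griesmer 2 3 d ≤ n := by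
  obtain ⟨F, _, hF, C, hC⟩ := h
  obtain ⟨m, rfl, hm, -⟩ := exists_mult_of_isCode hF hC
  exact griesmer_le_sum hm

noncomputable def lrcLength (d : ℕ) : ℕ :=
  if d ≤ 2 then 6 else if d ≤ 4 then 8 else if d = 5 then 11 else if d = 6 then 12
  else if d = 7 then 14 else griesmer 2 3 d

theorem lrcLength_le_sum {m : (Fin 3 → ZMod 2) → ℕ} {d : ℕ} (hd : 0 < d)
    (hm : ∀ x ≠ 0, d ≤ codeWeight m x) (hloc : ∀ w ≠ 0, m w ≠ 1) : lrcLength d ≤ ∑ w, m w := by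
  have hG := griesmer_le_sum hm
  rw [le_codeWeight_iff] at hm
  simp +decide only [ne_eq, forall_cube, IsEmpty.forall_iff, forall_const, true_and] at hloc
  rw [lrcLength, sum_cube] at *
  split_ifs <;> omega

theorem LRCExists.lrcLength_le {n d : ℕ} (hd : 0 < d) (h : LRCExists 2 n 3 d 1) :
    lrcLength d ≤ n := by
  obtain ⟨F, _, hF, C, hC, hloc⟩ := h
  obtain ⟨m, rfl, hm, hm₁⟩ := exists_mult_of_isCode hF hC
  exact lrcLength_le_sum hd hm (hm₁ hloc)

def symmMult (α β γ : ℕ) (w : Fin 3 → ZMod 2) : ℕ :=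
  match (w 0).val + (w 1).val + (w 2).val with
  | 1 => α
  | 2 => β
  | 3 => γ
  | _ => 0

theorem lrcExists_symmMult {α β γ d : ℕ} (hd : 0 < d) (hα : α ≠ 1) (hβ : β ≠ 1) (hγ : γ ≠ 1)
    (h₁ : d ≤ α + 2 * β + γ) (h₂ : d ≤ 2 * α + 2 * β) (h₃ : d ≤ 3 * α + γ) :
    LRCExists 2 (3 * α + 3 * β + γ) 3 d 1 := by
  have hsum : ∑ w, symmMult α β γ w = 3 * α + 3 * β + γ := by
    simp only [sum_cube, symmMult, Matrix.cons_val, ZMod.val_zero, ZMod.val_one, Nat.reduceAdd]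
    ring
  rw [← hsum]
  refine lrcExists_of_mult _ hd ?_ ?_
  · rw [le_codeWeight_iff]
    simp only [symmMult, Matrix.cons_val, ZMod.val_zero, ZMod.val_one, Nat.reduceAdd]
    omega
  · simp +decide [forall_cube, symmMult, ZMod.val_one, *]

theorem lrcLength_eq_griesmer {d : ℕ} (hd : 8 ≤ d) : lrcLength d = griesmer 2 3 d := by
  unfold lrcLength
  split_ifs <;> omega

theorem lrcExists_lrcLength {d : ℕ} (hd : 0 < d) : LRCExists 2 (lrcLength d) 3 d 1 := by
  obtain ⟨α, β, γ, hn, hα, hβ, hγ, h₁, h₂, h₃⟩ : ∃ α β γ : ℕ, 3 * α + 3 * β + γ = lrcLength d ∧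
      α ≠ 1 ∧ β ≠ 1 ∧ γ ≠ 1 ∧ d ≤ α + 2 * β + γ ∧ d ≤ 2 * α + 2 * β ∧ d ≤ 3 * α + γ := by
    rcases lt_or_ge d 8 with hd8 | hd8
    · interval_cases d
      exacts [⟨2, 0, 0, by decide⟩, ⟨2, 0, 0, by decide⟩, ⟨2, 0, 2, by decide⟩,
        ⟨2, 0, 2, by decide⟩, ⟨3, 0, 2, by decide⟩, ⟨3, 0, 3, by decide⟩, ⟨2, 2, 2, by decide⟩]
    obtain ⟨t, s, hs, rfl⟩ : ∃ t s, s < 4 ∧ d = 4 * t + s := ⟨d / 4, d % 4, by omega, by omega⟩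
    rw [lrcLength_eq_griesmer hd8, griesmer_two_three]
    interval_cases s
    exacts [⟨t, t, t, by omega⟩, ⟨t + 1, t, t, by omega⟩, ⟨t + 1, t, t + 1, by omega⟩,
      ⟨t + 1, t + 1, t, by omega⟩]
  exact hn ▸ lrcExists_symmMult hd hα hβ hγ h₁ h₂ h₃

theorem nLRC_two_three_one {d : ℕ} (hd : 0 < d) : nLRC 2 3 d 1 = lrcLength d :=
  le_antisymm (Nat.sInf_le (lrcExists_lrcLength hd))
    (le_csInf ⟨_, lrcExists_lrcLength hd⟩ fun _ hn => LRCExists.lrcLength_le hd hn)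

theorem nCode_two_three {d : ℕ} (hd : 8 ≤ d) : nCode 2 3 d = griesmer 2 3 d := by
  obtain ⟨F, _, hF, C, hC, -⟩ := lrcLength_eq_griesmer hd ▸ lrcExists_lrcLength (by omega)
  have hex : CodeExists 2 (griesmer 2 3 d) 3 d := ⟨F, _, hF, C, hC⟩
  exact le_antisymm (Nat.sInf_le hex) (le_csInf ⟨_, hex⟩ fun _ hn => CodeExists.griesmer_le hn)

theorem n2_k3_r1 :
    nLRC 2 3 1 1 = 6 ∧
    nLRC 2 3 2 1 = 6 ∧
    nLRC 2 3 3 1 = 8 ∧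
    nLRC 2 3 4 1 = 8 ∧
    nLRC 2 3 5 1 = 11 ∧
    nLRC 2 3 6 1 = 12 ∧
    nLRC 2 3 7 1 = 14 ∧
    (∀ d : ℕ, 8 ≤ d → nLRC 2 3 d 1 = nCode 2 3 d) := by
  refine ⟨?_, ?_, ?_, ?_, ?_, ?_, ?_, fun d hd => ?_⟩
  iterate 7 exact (nLRC_two_three_one (by norm_num)).trans rfl
  rw [nLRC_two_three_one (by omega), nCode_two_three hd, lrcLength_eq_griesmer hd]
end

section
/- For each integer k ≥ 2 one has n_2(k, 2^{k-2}, 2) = 2^{k-1} + 1; that is, the smallest length of a binary linear code of dimension k with minimum Hamming distance at least 2^{k-2} and locality 2 is exactly 2^{k-1} + 1. -/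
open scoped Classical

/-!
Lower bound: let `S` be a recovery set of a coordinate `i`, `|S| ≤ 2`. The subcode vanishing on
`S` has dimension at least `k - |S|` and, by locality, also vanishes at `i`. Plotkin's averaging
bound for it (a coordinate not identically zero on an `m`-dimensional code over `𝔽_q` is nonzero
on `q^m - q^(m-1)` of its words) then fails as soon as `n ≤ 2^(k-1)`.

Upper bound: append to the first-order Reed–Muller code of length `2^(k-1)`, whose minimum
distance is `2^(k-2)`, the coordinate `φ e` for a fixed `e ≠ 0`. Then
`c x = c (x + e) - c ∞` and `c ∞ = c e - c 0`, so every coordinate is recovered from two others.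
-/

open Finset Module

section Counting

variable {F M : Type*} [Field F] [Fintype F] [AddCommGroup M] [Module F M] [Fintype M]

theorem card_filter_dual_apply_eq {φ : Dual F M} (hφ : φ ≠ 0) (b : F) :
    #{x | φ x = b} = Fintype.card F ^ (finrank F M - 1) := by
  rw [AddMonoidHom.card_fiber_eq_of_mem_range φ (LinearMap.surjective hφ b)
    (LinearMap.surjective hφ 0), ← Dual.finrank_ker_add_one_of_ne_zero hφ, Nat.add_sub_cancel,
    ← card_eq_pow_finrank, ← Fintype.card_subtype]
  rfl

theorem card_filter_dual_apply_ne (φ : Dual F M) (b : F) :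
    #{x | φ x ≠ b} = Fintype.card F ^ finrank F M - #{x | φ x = b} := by
  have := card_filter_add_card_filter_not (s := univ) (fun x => φ x = b)
  rw [card_univ, card_eq_pow_finrank (K := F)] at this
  simp only [ne_eq]
  omega

theorem card_sub_le_card_filter_add_dual_apply_ne_zero {a : F} {φ : Dual F M} (h : (a, φ) ≠ 0) :
    Fintype.card F ^ finrank F M - Fintype.card F ^ (finrank F M - 1) ≤
      #{x | a + φ x ≠ 0} := by
  rcases eq_or_ne φ 0 with rfl | hφ
  · have ha : a ≠ 0 := fun ha => h (by simp [ha])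
    simp [ha, ← card_eq_pow_finrank]
  · have hfilter : #{x | a + φ x ≠ 0} = #{x | φ x ≠ -a} := by
      simp only [ne_eq, eq_neg_iff_add_eq_zero, add_comm a]
    rw [hfilter, card_filter_dual_apply_ne, card_filter_dual_apply_eq hφ]

end Counting

section Plotkin

variable {F : Type} [Field F] [Fintype F] {n : ℕ} (D : Submodule F (Fin n → F))

theorem sum_hamWt_eq_sum_card_filter :
    ∑ c : D, hamWt (c : Fin n → F) = ∑ i, #{c : D | (c : Fin n → F) i ≠ 0} := by
  simp only [hamWt, card_filter]
  exact sum_comm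

theorem card_filter_apply_ne_zero_le_s6 (i : Fin n) :
    #{c : D | (c : Fin n → F) i ≠ 0} ≤
      Fintype.card F ^ finrank F D - Fintype.card F ^ (finrank F D - 1) := by
  let φ : Dual F D := LinearMap.proj i ∘ₗ D.subtype
  rcases eq_or_ne φ 0 with hφ | hφ
  · have hzero : ∀ c : D, (c : Fin n → F) i = 0 := fun c => LinearMap.congr_fun hφ c
    simp [hzero]
  · rw [← card_filter_dual_apply_eq hφ 0, ← card_filter_dual_apply_ne]
    rfl

theorem mul_card_sub_one_le_sum_hamWt {d : ℕ} (hd : ∀ c ∈ D, c ≠ 0 → d ≤ hamWt c) :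
    d * (Fintype.card F ^ finrank F D - 1) ≤ ∑ c : D, hamWt (c : Fin n → F) := by
  have hcard : #{c : D | c ≠ 0} = Fintype.card F ^ finrank F D - 1 := by
    rw [filter_ne', card_erase_of_mem (mem_univ _), card_univ, card_eq_pow_finrank (K := F)]
  calc d * (Fintype.card F ^ finrank F D - 1) = ∑ c : D with c ≠ 0, d := by
        rw [sum_const, hcard, smul_eq_mul, mul_comm]
    _ ≤ ∑ c : D with c ≠ 0, hamWt (c : Fin n → F) :=
        sum_le_sum fun c hc => hd c c.2 (by simpa using hc)
    _ ≤ ∑ c : D, hamWt (c : Fin n → F) := sum_le_sum_of_subset (filter_subset _ _)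

theorem plotkin_bound {d : ℕ} (hd : ∀ c ∈ D, c ≠ 0 → d ≤ hamWt c)
    {Z : Finset (Fin n)} (hZ : ∀ c ∈ D, ∀ j ∈ Z, c j = 0) :
    d * (Fintype.card F ^ finrank F D - 1) ≤
      (n - #Z) * (Fintype.card F ^ finrank F D - Fintype.card F ^ (finrank F D - 1)) := by
  have hcol_zero : ∀ i ∈ Z, #{c : D | (c : Fin n → F) i ≠ 0} = 0 := fun i hi =>
    card_eq_zero.mpr (filter_eq_empty_iff.mpr fun c _ => not_not.mpr (hZ c c.2 i hi))
  calc d * (Fintype.card F ^ finrank F D - 1) ≤ ∑ c : D, hamWt (c : Fin n → F) :=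
        mul_card_sub_one_le_sum_hamWt D hd
    _ = ∑ i ∈ univ \ Z, #{c : D | (c : Fin n → F) i ≠ 0} := by
        rw [sum_hamWt_eq_sum_card_filter, ← sum_sdiff (subset_univ Z), sum_eq_zero hcol_zero,
          add_zero]
    _ ≤ ∑ _i ∈ univ \ Z, (Fintype.card F ^ finrank F D - Fintype.card F ^ (finrank F D - 1)) :=
        sum_le_sum fun i _ => card_filter_apply_ne_zero_le_s6 D i
    _ = _ := by rw [sum_const, smul_eq_mul, card_sdiff_of_subset (subset_univ Z), card_univ,
        Fintype.card_fin]

end Plotkin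

theorem two_pow_sub_mul_lt {k m n s : ℕ} (hk : 2 ≤ k) (hs : s ≤ 2) (hsn : s + 1 ≤ n)
    (hn : n ≤ 2 ^ (k - 1)) (hm : k ≤ m + s) :
    (n - (s + 1)) * (2 ^ m - 2 ^ (m - 1)) < 2 ^ (k - 2) * (2 ^ m - 1) := by
  obtain ⟨k, rfl⟩ : ∃ k', k = k' + 2 := ⟨k - 2, by omega⟩
  rcases m with _ | m
  · have : k = 0 := by omega
    subst this
    simp only [zero_add, Nat.add_one_sub_one, pow_one] at hn
    omega
  rw [show k + 2 - 1 = k + 1 from rfl, pow_succ] at hn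
  rw [Nat.add_sub_cancel, Nat.add_sub_cancel, pow_succ, show 2 ^ m * 2 - 2 ^ m = 2 ^ m by omega]
  have hA : 1 ≤ 2 ^ k := Nat.one_le_two_pow
  have hB : 1 ≤ 2 ^ m := Nat.one_le_two_pow
  have hAB : 2 ^ k < (s + 1) * 2 ^ m := by
    have : 2 ^ k * 2 ≤ 2 ^ m * 2 ^ s := by
      rw [← pow_succ, ← pow_add]; exact Nat.pow_le_pow_right (by norm_num) (by omega)
    interval_cases s <;> omega
  have hB2 : 1 ≤ 2 ^ m * 2 := by omega
  zify [hsn, hB2] at hn hAB ⊢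
  nlinarith

theorem Submodule.exists_le_forall_apply_eq_zero {F : Type*} [Field F] {n : ℕ}
    (C : Submodule F (Fin n → F)) (S : Finset (Fin n)) :
    ∃ D ≤ C, finrank F C ≤ finrank F D + #S ∧ ∀ c ∈ D, ∀ j ∈ S, c j = 0 := by
  let r : C →ₗ[F] (S → F) := LinearMap.funLeft F F ((↑) : S → Fin n) ∘ₗ C.subtype
  refine ⟨(LinearMap.ker r).map C.subtype, Submodule.map_subtype_le _ _, ?_, ?_⟩
  · have hrange := (LinearMap.range r).finrank_le
    rw [Module.finrank_fintype_fun_eq_card, Fintype.card_coe] at hrange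
    rw [Submodule.finrank_map_subtype_eq, ← r.finrank_range_add_finrank_ker]
    omega
  · rintro _ ⟨c, hc, rfl⟩ j hj
    exact congr_fun hc ⟨j, hj⟩

theorem two_pow_lt_of_lrcExists {n k : ℕ} (hk : 2 ≤ k) (h : LRCExists 2 n k (2 ^ (k - 2)) 2) :
    2 ^ (k - 1) < n := by
  obtain ⟨F, _, hF, C, ⟨hrank, hwt⟩, hloc⟩ := h
  have : Fintype F := @Fintype.ofFinite F (Nat.finite_of_card_ne_zero (by omega))
  have hq : Fintype.card F = 2 := Nat.card_eq_fintype_card (α := F) ▸ hF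
  have hkn : k ≤ n := hrank ▸ (Submodule.finrank_le C).trans_eq (Module.finrank_fin_fun F)
  let i : Fin n := ⟨0, by omega⟩
  obtain ⟨S, hiS, hS, hrec⟩ := hloc i
  obtain ⟨D, hDC, hDrank, hDS⟩ := C.exists_le_forall_apply_eq_zero S
  have hDZ : ∀ c ∈ D, ∀ j ∈ insert i S, c j = 0 := fun c hc =>
    forall_mem_insert _ _ _ |>.mpr ⟨hrec c (hDC hc) 0 C.zero_mem (hDS c hc), hDS c hc⟩
  have hZn : #(insert i S) ≤ n := (card_le_univ _).trans_eq (Fintype.card_fin n)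
  have hplotkin := plotkin_bound D (fun c hc => hwt c (hDC hc)) hDZ
  rw [hq, card_insert_of_notMem hiS] at hplotkin
  rw [card_insert_of_notMem hiS] at hZn
  by_contra hn
  exact (two_pow_sub_mul_lt hk hS hZn (not_lt.mp hn) (by omega)).not_ge hplotkin

section ReedMuller

variable {F V : Type*} [Field F] [AddCommGroup V] [Module F V]

def reedMullerPlusCoord (e : V) : (F × Dual F V) →ₗ[F] (Option V → F) where
  toFun p o := o.elim (p.2 e) fun x => p.1 + p.2 x
  map_add' p p' := by
    funext o
    cases o <;> simp [add_add_add_comm]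
  map_smul' a p := by
    funext o
    cases o <;> simp [mul_add]

@[simp]
theorem reedMullerPlusCoord_none (e : V) (p : F × Dual F V) :
    reedMullerPlusCoord e p none = p.2 e := rfl

@[simp]
theorem reedMullerPlusCoord_some (e : V) (p : F × Dual F V) (x : V) :
    reedMullerPlusCoord e p (some x) = p.1 + p.2 x := rfl

theorem reedMullerPlusCoord_injective (e : V) :
    Function.Injective (reedMullerPlusCoord (F := F) e) := by
  rw [← LinearMap.ker_eq_bot, LinearMap.ker_eq_bot']
  rintro ⟨a, φ⟩ h
  have ha : a = 0 := by simpa using congr_fun h (some 0)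
  have hφ : φ = 0 := LinearMap.ext fun x => by simpa [ha] using congr_fun h (some x)
  simp [ha, hφ]

theorem reedMullerPlusCoord_recovery {e : V} (he : e ≠ 0) (o : Option V) :
    ∃ o₁ o₂, o₁ ≠ o ∧ o₂ ≠ o ∧ ∀ p : F × Dual F V,
      reedMullerPlusCoord e p o = reedMullerPlusCoord e p o₁ - reedMullerPlusCoord e p o₂ := by
  cases o with
  | none => exact ⟨some e, some 0, by simp, by simp, fun p => by simp⟩
  | some x => exact ⟨some (x + e), none, by simpa using he, by simp, fun p => by simp; ring⟩

theorem card_sub_le_card_filter_reedMullerPlusCoord_ne_zero [Fintype F] [Fintype V] (e : V)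
    {p : F × Dual F V} (hp : p ≠ 0) :
    Fintype.card F ^ finrank F V - Fintype.card F ^ (finrank F V - 1) ≤
      #{o | reedMullerPlusCoord e p o ≠ 0} :=
  calc _ ≤ #{x | p.1 + p.2 x ≠ 0} := card_sub_le_card_filter_add_dual_apply_ne_zero hp
    _ ≤ _ := card_le_card_of_injOn some (fun x hx => by simpa using hx)
        (Option.some_injective _).injOn

end ReedMuller

theorem hamWt_comp_equiv {F : Type} [Field F] {ι : Type*} [Fintype ι] {n : ℕ} (g : ι → F)
    (σ : Fin n ≃ ι) : hamWt (g ∘ σ) = #{o | g o ≠ 0} := by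
  rw [hamWt, ← Fintype.card_subtype, ← Fintype.card_subtype]
  exact Fintype.card_congr (σ.subtypeEquiv fun _ => Iff.rfl)

theorem hasLocality_two_of_recovery {F : Type} [Field F] {n : ℕ} {C : Submodule F (Fin n → F)}
    (h : ∀ i, ∃ j₁ j₂, j₁ ≠ i ∧ j₂ ≠ i ∧ ∃ f : F → F → F, ∀ c ∈ C, c i = f (c j₁) (c j₂)) :
    HasLocality C 2 := by
  intro i
  obtain ⟨j₁, j₂, h₁, h₂, f, hf⟩ := h i
  refine ⟨{j₁, j₂}, by simp [h₁.symm, h₂.symm], card_le_two, fun c hc c' hc' hagree => ?_⟩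
  rw [hf c hc, hf c' hc', hagree j₁ (by simp), hagree j₂ (by simp)]

theorem exists_isCode_hasLocality_two {F : Type} [Field F] [Fintype F] {m : ℕ} (hm : 1 ≤ m) :
    ∃ C : Submodule F (Fin (Fintype.card F ^ m + 1) → F),
      IsCode (m + 1) (Fintype.card F ^ m - Fintype.card F ^ (m - 1)) C ∧ HasLocality C 2 := by
  let e : Fin m → F := Pi.single ⟨0, hm⟩ 1
  have he : e ≠ 0 := by simp [e]
  have hV : finrank F (Fin m → F) = m := Module.finrank_fin_fun F
  let σ : Fin (Fintype.card F ^ m + 1) ≃ Option (Fin m → F) :=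
    Fintype.equivOfCardEq (by simp [Fintype.card_option])
  let G := LinearMap.funLeft F F σ ∘ₗ reedMullerPlusCoord e
  have hG : ∀ p, G p = reedMullerPlusCoord e p ∘ σ := fun _ => rfl
  have hG_inj : Function.Injective G := by
    simp only [G, LinearMap.coe_comp]
    exact (LinearMap.funLeft_injective_of_surjective F F _ σ.surjective).comp
      (reedMullerPlusCoord_injective e)
  refine ⟨LinearMap.range G, ⟨?_, ?_⟩, ?_⟩
  · rw [LinearMap.finrank_range_of_inj hG_inj, Module.finrank_prod,
      Module.finrank_self, Subspace.dual_finrank_eq, hV, add_comm]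
  · rintro _ ⟨p, rfl⟩ hc
    have hp : p ≠ 0 := by rintro rfl; simp at hc
    rw [hG, hamWt_comp_equiv]
    simpa only [hV] using card_sub_le_card_filter_reedMullerPlusCoord_ne_zero e hp
  · refine hasLocality_two_of_recovery fun i => ?_
    obtain ⟨o₁, o₂, h₁, h₂, hrel⟩ := reedMullerPlusCoord_recovery (F := F) he (σ i)
    refine ⟨σ.symm o₁, σ.symm o₂, ?_, ?_, (· - ·), ?_⟩
    · rwa [Ne, σ.symm_apply_eq]
    · rwa [Ne, σ.symm_apply_eq]
    · rintro _ ⟨p, rfl⟩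
      simp [hG, hrel]

theorem lrcExists_two_pow {k : ℕ} (hk : 2 ≤ k) :
    LRCExists 2 (2 ^ (k - 1) + 1) k (2 ^ (k - 2)) 2 := by
  obtain ⟨k, rfl⟩ : ∃ k', k = k' + 2 := ⟨k - 2, by omega⟩
  have h := exists_isCode_hasLocality_two (F := ZMod 2) (m := k + 1) (by omega)
  have hd : 2 ^ (k + 1) - 2 ^ (k + 1 - 1) = 2 ^ k := by
    rw [pow_succ, Nat.add_sub_cancel]
    omega
  rw [ZMod.card, hd] at h
  exact ⟨ZMod 2, inferInstance, Nat.card_zmod 2, h⟩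

theorem n2_reed_muller_r2 (k : ℕ) (hk : 2 ≤ k) :
    nLRC 2 k (2 ^ (k - 2)) 2 = 2 ^ (k - 1) + 1 := by
  have hmem := lrcExists_two_pow hk
  exact le_antisymm (Nat.sInf_le hmem)
    (le_csInf ⟨_, hmem⟩ fun n hn => two_pow_lt_of_lrcExists hk hn)
end

section
/- For every prime power q and every integer k ≥ 1 one has n_q(k,1,2) = n_q(k,2,2) = ⌈3k/2⌉; that is, both for minimum distance 1 and for minimum distance 2, the smallest length of a k-dimensional linear code over F_q with locality 2 equals ⌈3k/2⌉. -/
open scoped Classical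
set_option synthInstance.maxHeartbeats 1000000
set_option maxHeartbeats 1000000
set_option linter.unusedVariables false
set_option linter.unnecessarySeqFocus false
set_option linter.unnecessarySimpa false

section Aux

variable {F : Type} [Field F]



def padv {k : ℕ} (x : Fin k → F) : ℕ → F := fun m => if h : m < k then x ⟨m, h⟩ else 0

lemma padv_add {k : ℕ} (x y : Fin k → F) (m : ℕ) : padv (x + y) m = padv x m + padv y m := by
  unfold padv; split <;> simp

lemma padv_smul {k : ℕ} (a : F) (x : Fin k → F) (m : ℕ) : padv (a • x) m = a * padv x m := by
  unfold padv; split <;> simp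

lemma padv_lt {k : ℕ} (x : Fin k → F) {m : ℕ} (h : m < k) : padv x m = x ⟨m, h⟩ := dif_pos h

lemma padv_ge {k : ℕ} (x : Fin k → F) {m : ℕ} (h : ¬ m < k) : padv x m = 0 := dif_neg h

lemma padv_ne_zero {k : ℕ} {x : Fin k → F} {m : ℕ} (h : padv x m ≠ 0) : m < k := by
  by_contra hm; exact h (padv_ge x hm)

/-- encoding map for the length `k + (k+1)/2` locality-2 code -/
def encL (k N : ℕ) : (Fin k → F) →ₗ[F] (Fin N → F) where
  toFun x := fun j => if (j : ℕ) < k then padv x j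
    else padv x (2 * ((j : ℕ) - k)) + padv x (2 * ((j : ℕ) - k) + 1)
  map_add' x y := by
    funext j
    by_cases h : (j : ℕ) < k <;> simp [h, padv_add] <;> ring
  map_smul' a x := by
    funext j
    by_cases h : (j : ℕ) < k <;> simp [h, padv_smul] <;> ring

lemma encL_apply_lt {k N : ℕ} (x : Fin k → F) (j : Fin N) (h : (j : ℕ) < k) :
    encL k N x j = padv x j := by simp [encL, h]

lemma encL_apply_ge {k N : ℕ} (x : Fin k → F) (j : Fin N) (h : ¬ (j : ℕ) < k) :
    encL k N x j = padv x (2 * ((j : ℕ) - k)) + padv x (2 * ((j : ℕ) - k) + 1) := by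
  simp [encL, h]

lemma encL_val_lt {k N : ℕ} (x : Fin k → F) {m : ℕ} (hm : m < k) (hmN : m < N) :
    encL k N x ⟨m, hmN⟩ = padv x m := by simp [encL, hm]

lemma encL_val_ge {k N : ℕ} (x : Fin k → F) {m : ℕ} (hm : ¬ m < k) (hmN : m < N) :
    encL k N x ⟨m, hmN⟩ = padv x (2 * (m - k)) + padv x (2 * (m - k) + 1) := by
  simp [encL, hm]

lemma encL_inj {k N : ℕ} (hkN : k ≤ N) : Function.Injective (encL k N (F := F)) := by
  rw [injective_iff_map_eq_zero]
  intro x hx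
  funext i
  have hi : (i : ℕ) < N := lt_of_lt_of_le i.2 hkN
  have := congrFun hx ⟨(i : ℕ), hi⟩
  rw [encL_val_lt x i.2 hi, padv_lt x i.2] at this
  simpa using this

lemma hamWt_two {n : ℕ} {c : Fin n → F} {j1 j2 : Fin n} (hne : j1 ≠ j2)
    (h1 : c j1 ≠ 0) (h2 : c j2 ≠ 0) : 2 ≤ hamWt c := by
  unfold hamWt
  have hsub : ({j1, j2} : Finset (Fin n)) ⊆ Finset.univ.filter fun i => c i ≠ 0 := by
    intro x hx
    rcases Finset.mem_insert.mp hx with rfl | hx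
    · simp [h1]
    · rw [Finset.mem_singleton] at hx; subst hx; simp [h2]
  calc 2 = ({j1, j2} : Finset (Fin n)).card := (Finset.card_pair hne).symm
    _ ≤ _ := Finset.card_le_card hsub

lemma code_dist {k : ℕ} (hk : 1 ≤ k) (x : Fin k → F) (hx : x ≠ 0) :
    2 ≤ hamWt (encL k (k + (k+1)/2) x) := by
  set N := k + (k+1)/2 with hN
  obtain ⟨i, hi⟩ : ∃ i : Fin k, x i ≠ 0 := by
    by_contra h; push_neg at h; exact hx (funext h)
  have hik : (i : ℕ) < k := i.2
  set t := (i : ℕ) / 2 with ht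
  have h2t : 2 * t < k := by omega
  have hkt : k + t < N := by omega
  have hpi : padv x (i : ℕ) ≠ 0 := by
    rw [padv_lt x hik]
    simpa [Fin.eta] using hi
  have hior : (i : ℕ) = 2 * t ∨ (i : ℕ) = 2 * t + 1 := by omega
  by_cases hboth : padv x (2 * t) ≠ 0 ∧ padv x (2 * t + 1) ≠ 0
  · -- two systematic coordinates
    have h2t1 : 2 * t + 1 < k := padv_ne_zero hboth.2
    refine hamWt_two (j1 := ⟨2 * t, by omega⟩) (j2 := ⟨2 * t + 1, by omega⟩) ?_ ?_ ?_
    · intro h; rw [Fin.ext_iff] at h; simp at h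
    · rw [encL_val_lt x h2t (by omega)]; exact hboth.1
    · rw [encL_val_lt x h2t1 (by omega)]; exact hboth.2
  · -- one systematic + parity
    have hsum : padv x (2 * t) + padv x (2 * t + 1) ≠ 0 := by
      rcases hior with h' | h' <;> rw [h'] at hpi
      · have h0 : padv x (2 * t + 1) = 0 := by tauto
        rw [h0, add_zero]; exact hpi
      · have h0 : padv x (2 * t) = 0 := by tauto
        rw [h0, zero_add]; exact hpi
    refine hamWt_two (j1 := ⟨(i : ℕ), by omega⟩) (j2 := ⟨k + t, hkt⟩) ?_ ?_ ?_
    · intro h; rw [Fin.ext_iff] at h; simp at h; omega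
    · rw [encL_val_lt x hik (by omega)]; exact hpi
    · rw [encL_val_ge x (by omega) hkt]
      have : k + t - k = t := by omega
      rw [this]; exact hsum

/-- reduce locality to a linear condition -/
lemma hasLocality_of {n r : ℕ} (C : Submodule F (Fin n → F))
    (h : ∀ i : Fin n, ∃ S : Finset (Fin n), i ∉ S ∧ S.card ≤ r ∧
      ∀ c ∈ C, (∀ j ∈ S, c j = 0) → c i = 0) : HasLocality C r := by
  intro i
  obtain ⟨S, h1, h2, h3⟩ := h i
  refine ⟨S, h1, h2, fun c hc c' hc' hag => ?_⟩
  have := h3 (c - c') (sub_mem hc hc') (fun j hj => by simp [hag j hj])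
  simpa [sub_eq_zero] using this

lemma code_locality {k : ℕ} (hk : 1 ≤ k) :
    HasLocality (LinearMap.range (encL k (k + (k+1)/2) (F := F))) 2 := by
  set N := k + (k+1)/2 with hN
  apply hasLocality_of
  intro i
  have hiN : (i : ℕ) < N := i.2
  -- recovery condition reduces to codewords
  have key : ∀ (S : Finset (Fin N)), (∀ x : Fin k → F, (∀ j ∈ S, encL k N x j = 0) → encL k N x i = 0) →
      (∀ c ∈ LinearMap.range (encL k N (F := F)), (∀ j ∈ S, c j = 0) → c i = 0) := by
    rintro S hS c ⟨x, rfl⟩ hz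
    exact hS x hz
  by_cases hik : (i : ℕ) < k
  · -- systematic coordinate
    set t := (i : ℕ) / 2 with ht
    have h2t : 2 * t < k := by omega
    have hkt : k + t < N := by omega
    have hiork : (i : ℕ) = 2 * t ∨ (i : ℕ) = 2 * t + 1 := by omega
    rcases hiork with hie | hio
    · by_cases h1 : 2 * t + 1 < k
      · refine ⟨{⟨2 * t + 1, by omega⟩, ⟨k + t, hkt⟩}, ?_, ?_, key _ ?_⟩
        · simp [Fin.ext_iff]; omega
        · exact (Finset.card_insert_le _ _).trans (by simp)
        · intro x hz
          have hz1 := hz _ (Finset.mem_insert_self _ _)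
          have hz2 := hz _ (Finset.mem_insert_of_mem (Finset.mem_singleton_self _))
          rw [encL_val_lt x h1 (by omega)] at hz1
          rw [encL_val_ge x (by omega) hkt] at hz2
          have htt : k + t - k = t := by omega
          rw [htt, hz1, add_zero] at hz2
          have : encL k N x i = padv x (2 * t) := by
            have := encL_val_lt (N := N) x (m := (i : ℕ)) hik hiN
            rw [Fin.eta] at this
            rw [this, hie]
          rw [this, hz2]
      · refine ⟨{⟨k + t, hkt⟩}, ?_, by simp, key _ ?_⟩
        · simp [Fin.ext_iff]; omega
        · intro x hz
          have hz2 := hz _ (Finset.mem_singleton_self _)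
          rw [encL_val_ge x (by omega) hkt] at hz2
          have htt : k + t - k = t := by omega
          rw [htt, padv_ge x h1, add_zero] at hz2
          have : encL k N x i = padv x (2 * t) := by
            have := encL_val_lt (N := N) x (m := (i : ℕ)) hik hiN
            rw [Fin.eta] at this
            rw [this, hie]
          rw [this, hz2]
    · refine ⟨{⟨2 * t, by omega⟩, ⟨k + t, hkt⟩}, ?_, ?_, key _ ?_⟩
      · simp [Fin.ext_iff]; omega
      · exact (Finset.card_insert_le _ _).trans (by simp)
      · intro x hz
        have hz1 := hz _ (Finset.mem_insert_self _ _)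
        have hz2 := hz _ (Finset.mem_insert_of_mem (Finset.mem_singleton_self _))
        rw [encL_val_lt x h2t (by omega)] at hz1
        rw [encL_val_ge x (by omega) hkt] at hz2
        have htt : k + t - k = t := by omega
        rw [htt, hz1, zero_add] at hz2
        have : encL k N x i = padv x (2 * t + 1) := by
          have := encL_val_lt (N := N) x (m := (i : ℕ)) hik hiN
          rw [Fin.eta] at this
          rw [this, hio]
        rw [this, hz2]
  · -- parity coordinate
    set t := (i : ℕ) - k with ht
    have h2t : 2 * t < k := by omega
    have hval : ∀ x : Fin k → F, encL k N x i = padv x (2 * t) + padv x (2 * t + 1) := by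
      intro x
      have := encL_val_ge (N := N) x (m := (i : ℕ)) hik hiN
      rw [Fin.eta] at this
      rw [this, ht]
    by_cases h1 : 2 * t + 1 < k
    · refine ⟨{⟨2 * t, by omega⟩, ⟨2 * t + 1, by omega⟩}, ?_, ?_, key _ ?_⟩
      · simp [Fin.ext_iff]; omega
      · exact (Finset.card_insert_le _ _).trans (by simp)
      · intro x hz
        have hz1 := hz _ (Finset.mem_insert_self _ _)
        have hz2 := hz _ (Finset.mem_insert_of_mem (Finset.mem_singleton_self _))
        rw [encL_val_lt x h2t (by omega)] at hz1
        rw [encL_val_lt x h1 (by omega)] at hz2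
        rw [hval x, hz1, hz2, add_zero]
    · refine ⟨{⟨2 * t, by omega⟩}, ?_, by simp, key _ ?_⟩
      · simp [Fin.ext_iff]; omega
      · intro x hz
        have hz1 := hz _ (Finset.mem_singleton_self _)
        rw [encL_val_lt x h2t (by omega)] at hz1
        rw [hval x, hz1, padv_ge x h1, add_zero]


/-- codewords of `C` vanishing on `U`. -/
noncomputable def zSub (C : Submodule F (Fin n → F)) (U : Finset (Fin n)) :
    Submodule F (Fin n → F) :=
  C ⊓ ⨅ j ∈ U, LinearMap.ker (LinearMap.proj j : (Fin n → F) →ₗ[F] F)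

lemma mem_zSub {C : Submodule F (Fin n → F)} {U : Finset (Fin n)} {c : Fin n → F} :
    c ∈ zSub C U ↔ c ∈ C ∧ ∀ j ∈ U, c j = 0 := by
  simp [zSub]

lemma zSub_mono {C : Submodule F (Fin n → F)} {U U' : Finset (Fin n)} (h : U ⊆ U') :
    zSub C U' ≤ zSub C U := by
  intro c hc
  rw [mem_zSub] at hc ⊢
  exact ⟨hc.1, fun j hj => hc.2 j (h hj)⟩

lemma zSub_le (C : Submodule F (Fin n → F)) (U : Finset (Fin n)) : zSub C U ≤ C :=
  inf_le_left

lemma finrank_zSub_insert (C : Submodule F (Fin n → F)) (U : Finset (Fin n)) (i : Fin n) :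
    Module.finrank F (zSub C U) ≤ Module.finrank F (zSub C (insert i U)) + 1 := by
  set φ : (zSub C U) →ₗ[F] F := (LinearMap.proj i).comp (zSub C U).subtype with hφ
  have hrk := LinearMap.finrank_range_add_finrank_ker φ
  have hle : zSub C (insert i U) ≤ zSub C U := zSub_mono (Finset.subset_insert _ _)
  have hker : LinearMap.ker φ = Submodule.comap (zSub C U).subtype (zSub C (insert i U)) := by
    ext ⟨c, hc⟩
    rw [mem_zSub] at hc
    simp [φ, mem_zSub, hc.1, Finset.forall_mem_insert]
    intro _
    exact hc.2
  have hker2 : Module.finrank F (LinearMap.ker φ) = Module.finrank F (zSub C (insert i U)) := by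
    rw [hker]
    exact (Submodule.comapSubtypeEquivOfLe hle).finrank_eq
  have hr1 : Module.finrank F (LinearMap.range φ) ≤ 1 := by
    simpa using Submodule.finrank_le (LinearMap.range φ)
  omega

lemma finrank_zSub_union (C : Submodule F (Fin n → F)) (U V : Finset (Fin n)) :
    Module.finrank F (zSub C U) ≤ Module.finrank F (zSub C (U ∪ V)) + V.card := by
  induction V using Finset.induction_on with
  | empty => rw [Finset.union_empty]; simp
  | @insert a V ha ih =>
      have h1 := finrank_zSub_insert C (U ∪ V) a
      rw [← Finset.union_insert] at h1
      rw [Finset.card_insert_of_notMem ha]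
      omega

lemma zSub_insert_eq (C : Submodule F (Fin n → F)) (U : Finset (Fin n)) (i : Fin n)
    (h : ∀ c ∈ C, (∀ j ∈ U, c j = 0) → c i = 0) :
    zSub C (insert i U) = zSub C U := by
  apply le_antisymm (zSub_mono (Finset.subset_insert _ _))
  intro c hc
  rw [mem_zSub] at hc ⊢
  exact ⟨hc.1, by rw [Finset.forall_mem_insert]; exact ⟨h c hc.1 hc.2, hc.2⟩⟩

lemma lower_step (C : Submodule F (Fin n → F)) (hloc : HasLocality C 2) :
    ∀ m (U : Finset (Fin n)), Module.finrank F (zSub C U) = m →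
      3 * (Module.finrank F C - m) ≤ 2 * U.card →
      3 * Module.finrank F C ≤ 2 * n := by
  intro m
  induction m using Nat.strong_induction_on with
  | _ m ih =>
    intro U hm hinv
    rcases Nat.eq_zero_or_pos m with rfl | hmpos
    · have hcard : U.card ≤ n := by
        simpa using Finset.card_le_univ U
      omega
    -- find nonzero codeword vanishing on U
    have hne : zSub C U ≠ ⊥ := by
      intro h
      rw [h] at hm
      simp [finrank_bot] at hm
      omega
    obtain ⟨c, hcZ, hc0⟩ := (Submodule.ne_bot_iff _).mp hne
    obtain ⟨i, hci⟩ : ∃ i, c i ≠ 0 := by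
      by_contra h
      push_neg at h
      exact hc0 (funext h)
    rw [mem_zSub] at hcZ
    have hiU : i ∉ U := fun h => hci (hcZ.2 i h)
    obtain ⟨S, hiS, hScard, hSrec⟩ := hloc i
    have hrec : ∀ d ∈ C, (∀ j ∈ S, d j = 0) → d i = 0 := by
      intro d hd hdz
      have := hSrec d hd 0 (zero_mem C) (fun j hj => by simpa using hdz j hj)
      simpa using this
    -- s := number of new coordinates from S
    set V := S \ U with hV
    have hsle : V.card ≤ 2 := le_trans (Finset.card_le_card (Finset.sdiff_subset)) hScard
    have hUV : U ∪ V = U ∪ S := Finset.union_sdiff_self_eq_union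
    -- s ≥ 1
    have hspos : 0 < V.card := by
      rcases Finset.eq_empty_or_nonempty V with h | h
      · exfalso
        have hSU : S ⊆ U := Finset.sdiff_eq_empty_iff_subset.mp h
        exact hci (hrec c hcZ.1 (fun j hj => hcZ.2 j (hSU hj)))
      · exact Finset.card_pos.mpr h
    set U₂ : Finset (Fin n) := insert i (U ∪ S) with hU₂
    -- rank of Z U₂
    have heq1 : zSub C U₂ = zSub C (U ∪ S) :=
      zSub_insert_eq C (U ∪ S) i (fun d hd hdz => hrec d hd (fun j hj => hdz j (Finset.mem_union_right _ hj)))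
    have hdrop : Module.finrank F (zSub C U) ≤ Module.finrank F (zSub C U₂) + V.card := by
      rw [heq1, ← hUV]
      exact finrank_zSub_union C U V
    have hstrict : Module.finrank F (zSub C U₂) < m := by
      rw [← hm]
      apply Submodule.finrank_lt_finrank_of_lt
      apply lt_of_le_of_ne (zSub_mono (by intro x hx; simp [hU₂]; tauto))
      intro h
      have : c ∈ zSub C U₂ := h ▸ (mem_zSub.mpr hcZ)
      rw [mem_zSub] at this
      exact hci (this.2 i (Finset.mem_insert_self _ _))
    have hiUS : i ∉ U ∪ S := by
      simp [Finset.mem_union]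
      exact ⟨hiU, hiS⟩
    have hcardU₂ : U₂.card = U.card + V.card + 1 := by
      rw [hU₂, Finset.card_insert_of_notMem hiUS, ← hUV,
        Finset.card_union_of_disjoint Finset.disjoint_sdiff]
    have hmk : m ≤ Module.finrank F C := by
      rw [← hm]
      exact Submodule.finrank_mono (zSub_le C U)
    exact ih (Module.finrank F (zSub C U₂)) hstrict U₂ rfl (by omega)

lemma lower_bound {k : ℕ} (C : Submodule F (Fin n → F))
    (hk : Module.finrank F C = k) (hloc : HasLocality C 2) : 3 * k ≤ 2 * n := by
  have h0 : zSub C ∅ = C := by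
    ext c; simp [mem_zSub]
  have := lower_step C hloc (Module.finrank F C) ∅ (by rw [h0]) (by simp)
  omega


end Aux

lemma ceil_three_half (k : ℕ) : ⌈(3 * (k : ℚ)) / 2⌉₊ = k + (k + 1) / 2 := by
  rcases Nat.even_or_odd k with ⟨r, hr⟩ | ⟨r, hr⟩
  · subst hr
    have h : (3 * ((r + r : ℕ) : ℚ)) / 2 = ((3 * r : ℕ) : ℚ) := by push_cast; ring
    rw [h, Nat.ceil_natCast]
    omega
  · subst hr
    have h : ⌈(3 * ((2 * r + 1 : ℕ) : ℚ)) / 2⌉₊ = 3 * r + 2 := by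
      rw [Nat.ceil_eq_iff (by omega)]
      constructor <;> push_cast <;> linarith
    rw [h]
    omega

theorem n_d1_d2_r2 (q k : ℕ) (hq : IsPrimePow q) (hk : 1 ≤ k) :
    nLRC q k 1 2 = ⌈(3 * (k : ℚ)) / 2⌉₊ ∧ nLRC q k 2 2 = ⌈(3 * (k : ℚ)) / 2⌉₊ := by
  obtain ⟨p, m, hp, hm, rfl⟩ := hq
  set N := k + (k + 1) / 2 with hNdef
  have hceil := ceil_three_half k
  haveI : Fact (Nat.Prime p) := ⟨Nat.prime_iff.mpr hp⟩
  set F := GaloisField p m with hF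
  have hcard : Nat.card F = p ^ m := GaloisField.card p m (by omega)
  have hkN : k ≤ N := by omega
  set C := LinearMap.range (encL k N (F := F)) with hC
  have hrank : Module.finrank F C = k := by
    rw [hC, LinearMap.finrank_range_of_inj (encL_inj hkN)]
    exact Module.finrank_fin_fun F
  have hdist : ∀ c ∈ C, c ≠ 0 → 2 ≤ hamWt c := by
    rintro c ⟨x, rfl⟩ hc
    exact code_dist hk x (fun h => hc (by rw [h, map_zero]))
  have hloc : HasLocality C 2 := code_locality (F := F) hk
  have hmem2 : LRCExists (p ^ m) N k 2 2 :=
    ⟨F, inferInstance, hcard, C, ⟨hrank, hdist⟩, hloc⟩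
  have hmem1 : LRCExists (p ^ m) N k 1 2 :=
    ⟨F, inferInstance, hcard, C,
      ⟨hrank, fun c hc h0 => le_trans (by omega) (hdist c hc h0)⟩, hloc⟩
  have hlow : ∀ d n', LRCExists (p ^ m) n' k d 2 → N ≤ n' := by
    rintro d n' ⟨F', _, _, C', ⟨hr, _⟩, hl⟩
    have := lower_bound C' hr hl
    omega
  rw [hceil]
  constructor
  · exact le_antisymm (Nat.sInf_le hmem1)
      (le_csInf ⟨N, hmem1⟩ (fun n' hn' => hlow 1 n' hn'))
  · exact le_antisymm (Nat.sInf_le hmem2)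
      (le_csInf ⟨N, hmem2⟩ (fun n' hn' => hlow 2 n' hn'))
end

section
/- For every prime power q, every integer r ≥ 2 and every integer d ≥ 2 one has n_q(2,d,r) = d + ⌈d/q⌉; that is, the smallest length of a two-dimensional linear code over F_q with minimum Hamming distance at least d and locality r equals the Griesmer bound d + ⌈d/q⌉. -/
open scoped Classical

/-!
Lower bound: count the pairs `(c, i)` with `c ∈ C` and `c i = 0`. The kernel of each coordinate
functional on the `2`-dimensional code `C` is nonzero, so every coordinate is a zero of at least
`q` codewords, while the zero codeword has `n` zeros and each of the other `q² - 1` codewords at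
most `n - d`. Hence `n q ≤ n + (q² - 1)(n - d)`, i.e. `d ≤ q (n - d)`.

Upper bound: take as columns of a generator matrix `n = d + ⌈d/q⌉` representatives of points of the
projective line `P¹(F)`, using each of its `q + 1` points at most `⌈d/q⌉` times. A nonzero codeword
vanishes only on the columns of a single point, so it has weight at least `d`; and the values at
any two columns at distinct points determine the codeword, which gives locality `2`.
-/

open Finset Module

theorem exists_fiber_card_le {ι P : Type*} [Fintype ι] [Fintype P] [DecidableEq P] {e : ℕ}
    (h : Fintype.card ι ≤ Fintype.card P * e) :
    ∃ β : ι → P, ∀ p, #{i | β i = p} ≤ e := by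
  obtain ⟨g⟩ : Nonempty (ι ↪ P × Fin e) :=
    Function.Embedding.nonempty_of_card_le (by simpa using h)
  refine ⟨fun i => (g i).1, fun p => ?_⟩
  calc #{i | (g i).1 = p} ≤ #(univ : Finset (Fin e)) := by
        refine card_le_card_of_injOn (fun i => (g i).2) (fun _ _ => mem_coe.2 (mem_univ _)) ?_
        intro i hi j hj hij
        simp only [coe_filter, Set.mem_ofPred_eq, mem_univ, true_and] at hi hj
        exact g.injective (Prod.ext (hi.trans hj.symm) hij)
    _ = e := by simp

theorem exists_apply_notMem_of_card_mul_lt {ι P : Type*} [Fintype ι] [DecidableEq P]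
    {β : ι → P} {e : ℕ} (hβ : ∀ p, #{i | β i = p} ≤ e) (T : Finset P)
    (hT : #T * e < Fintype.card ι) :
    ∃ i, β i ∉ T := by
  by_contra! hall
  have := card_le_mul_card_image_of_maps_to (s := univ) (fun i _ => hall i) e
    (fun p _ => by simpa using hβ p)
  rw [card_univ] at this
  linarith [mul_comm #T e]

theorem natCeil_div_le_iff_s11 {q d m : ℕ} (hq : 0 < q) : ⌈(d : ℚ) / q⌉₊ ≤ m ↔ d ≤ q * m := by
  rw [Nat.ceil_le, div_le_iff₀ (by positivity), mul_comm]
  norm_cast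

theorem finrank_le_finrank_inf_ker_add_one {F V : Type*} [Field F] [AddCommGroup V]
    [Module F V] [FiniteDimensional F V] (C : Submodule F V) (f : V →ₗ[F] F) :
    finrank F C ≤ finrank F ↥(C ⊓ LinearMap.ker f) + 1 := by
  have hsup := Submodule.finrank_sup_add_finrank_inf_eq C (LinearMap.ker f)
  have hV := Submodule.finrank_le (C ⊔ LinearMap.ker f)
  have hrank := LinearMap.finrank_range_add_finrank_ker f
  have hrange := Submodule.finrank_le (LinearMap.range f)
  rw [finrank_self] at hrange
  omega

theorem card_filter_mem_submodule {F : Type} [Field F] [Fintype F] {ι : Type*} [Fintype ι]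
    [DecidableEq ι] (K : Submodule F (ι → F)) :
    #{x : ι → F | x ∈ K} = Fintype.card F ^ finrank F K := by
  rw [← Fintype.card_subtype, Module.card_eq_pow_finrank (K := F) (V := K)]

theorem card_zeros_add_hamWt {F : Type} [Field F] {n : ℕ} (c : Fin n → F) :
    #{i | c i = 0} + hamWt c = n := by
  rw [hamWt, card_filter_add_card_filter_not, card_univ, Fintype.card_fin]

theorem IsCode.card_mul_pow_le {F : Type} [Field F] [Fintype F] {n k d : ℕ}
    {C : Submodule F (Fin n → F)} (hC : IsCode k d C) :
    (n : ℤ) * Fintype.card F ^ (k - 1) ≤ n + (Fintype.card F ^ k - 1) * (n - d) := by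
  set q := Fintype.card F
  set S : Finset (Fin n → F) := {c | c ∈ C}
  have hS : #S = q ^ k := by rw [card_filter_mem_submodule, hC.1]
  have hdouble : ∑ c ∈ S, #{i | c i = 0} =
      ∑ i, #{c : Fin n → F | c ∈ C ⊓ LinearMap.ker (LinearMap.proj i)} := by
    simp only [card_filter, S, sum_filter]
    rw [sum_comm]
    simp [ite_and, Submodule.mem_inf]
  have hker (i : Fin n) :
      q ^ (k - 1) ≤ #{c : Fin n → F | c ∈ C ⊓ LinearMap.ker (LinearMap.proj i)} := by
    rw [card_filter_mem_submodule]
    have := finrank_le_finrank_inf_ker_add_one C (LinearMap.proj i)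
    exact Nat.pow_le_pow_right Fintype.card_pos (by rw [hC.1] at this; omega)
  have hzeros (c) (hc : c ∈ S.erase 0) : (#{i | c i = 0} : ℤ) ≤ n - d := by
    obtain ⟨hc0, hcS⟩ := mem_erase.mp hc
    have := hC.2 c (by simpa [S] using hcS) hc0
    have := card_zeros_add_hamWt c
    omega
  have h0 : (0 : Fin n → F) ∈ S := by simp [S, C.zero_mem]
  calc (n : ℤ) * q ^ (k - 1) = ∑ _i : Fin n, ((q ^ (k - 1) : ℕ) : ℤ) := by simp
    _ ≤ ∑ i, (#{c : Fin n → F | c ∈ C ⊓ LinearMap.ker (LinearMap.proj i)} : ℤ) :=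
      sum_le_sum fun i _ => by exact_mod_cast hker i
    _ = ∑ c ∈ S, (#{i | c i = 0} : ℤ) := by exact_mod_cast hdouble.symm
    _ = n + ∑ c ∈ S.erase 0, (#{i | c i = 0} : ℤ) := by
      rw [← add_sum_erase S _ h0]
      simp
    _ ≤ n + (q ^ k - 1) * (n - d) := by
      have := sum_le_card_nsmul _ _ _ hzeros
      rw [card_erase_of_mem h0, hS, nsmul_eq_mul,
        Nat.cast_sub (Nat.one_le_pow _ _ Fintype.card_pos)] at this
      push_cast at this
      linarith

theorem IsCode.add_natCeil_div_le {F : Type} [Field F] [Fintype F] {n d : ℕ}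
    {C : Submodule F (Fin n → F)} (hC : IsCode 2 d C) :
    d + ⌈(d : ℚ) / Fintype.card F⌉₊ ≤ n := by
  set q := Fintype.card F
  have hq : 1 < q := Fintype.one_lt_card
  have hcount := hC.card_mul_pow_le
  have hdq : (d : ℤ) ≤ q * (n - d) := by
    have hq' : (1 : ℤ) < q := by exact_mod_cast hq
    simp only [Nat.add_one_sub_one, pow_one] at hcount
    nlinarith
  have hdn : (d : ℤ) ≤ n := by nlinarith
  obtain ⟨m, rfl⟩ := Nat.exists_eq_add_of_le (show d ≤ n by exact_mod_cast hdn)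
  have hdm : d ≤ q * m := by push_cast at hdq; exact_mod_cast (by linarith : (d : ℤ) ≤ q * m)
  exact Nat.add_le_add_left ((natCeil_div_le_iff_s11 (by omega)).mpr hdm) d

section ColumnCode

variable {F : Type} [Field F] {ι : Type*}

/-- The encoder of the code whose generator matrix has the columns `v i`. -/
def columnsEncode (v : ι → F × F) : F × F →ₗ[F] ι → F where
  toFun a i := a.1 * (v i).1 + a.2 * (v i).2
  map_add' a b := by ext i; simp only [Prod.fst_add, Prod.snd_add, Pi.add_apply]; ring
  map_smul' s a := by
    ext i
    simp only [Prod.smul_fst, Prod.smul_snd, smul_eq_mul, RingHom.id_apply, Pi.smul_apply]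
    ring

@[simp]
theorem columnsEncode_apply (v : ι → F × F) (a : F × F) (i : ι) :
    columnsEncode v a i = a.1 * (v i).1 + a.2 * (v i).2 :=
  rfl

theorem eq_zero_of_columnsEncode_eq_zero {v : ι → F × F} {j k : ι}
    (hjk : (v j).1 * (v k).2 ≠ (v j).2 * (v k).1) {a : F × F}
    (hj : columnsEncode v a j = 0) (hk : columnsEncode v a k = 0) : a = 0 := by
  rw [columnsEncode_apply] at hj hk
  have hdet : (v j).1 * (v k).2 - (v j).2 * (v k).1 ≠ 0 := sub_ne_zero.mpr hjk
  have h1 : a.1 * ((v j).1 * (v k).2 - (v j).2 * (v k).1) = 0 := by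
    linear_combination (v k).2 * hj - (v j).2 * hk
  have h2 : a.2 * ((v j).1 * (v k).2 - (v j).2 * (v k).1) = 0 := by
    linear_combination (v j).1 * hk - (v k).1 * hj
  exact Prod.ext ((mul_eq_zero.mp h1).resolve_right hdet) ((mul_eq_zero.mp h2).resolve_right hdet)

/-- Representatives of the points of the projective line `P¹(F) = F ∪ {∞}`. -/
def projPoint : Option F → F × F
  | none => (0, 1)
  | some t => (1, t)

theorem projPoint_fst_mul_snd_ne {p p' : Option F} (h : p ≠ p') :
    (projPoint p).1 * (projPoint p').2 ≠ (projPoint p).2 * (projPoint p').1 := by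
  cases p <;> cases p' <;> simp_all [projPoint, eq_comm]

theorem card_zeros_columnsEncode_projPoint_le [Fintype ι] {β : ι → Option F} {e : ℕ}
    (hβ : ∀ p, #{i | β i = p} ≤ e) {a : F × F} (ha : a ≠ 0) :
    #{i | columnsEncode (projPoint ∘ β) a i = 0} ≤ e := by
  obtain hempty | ⟨i₀, hi₀⟩ :=
    (filter (fun i => columnsEncode (projPoint ∘ β) a i = 0) univ).eq_empty_or_nonempty
  · rw [hempty, card_empty]
    exact Nat.zero_le e
  refine (card_le_card fun i hi => ?_).trans (hβ (β i₀))
  simp only [mem_filter, mem_univ, true_and] at hi hi₀ ⊢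
  by_contra hne
  exact ha (eq_zero_of_columnsEncode_eq_zero (projPoint_fst_mul_snd_ne hne) hi hi₀)

end ColumnCode

section ProjectiveLineCode

variable {F : Type} [Field F] {n e : ℕ} {β : Fin n → Option F}

theorem isCode_range_columnsEncode_projPoint (hβ : ∀ p, #{i | β i = p} ≤ e) (hen : e < n) :
    IsCode 2 (n - e) (LinearMap.range (columnsEncode (projPoint ∘ β))) := by
  refine ⟨?_, ?_⟩
  · have hinj : Function.Injective (columnsEncode (projPoint ∘ β)) := by
      rw [← LinearMap.ker_eq_bot, LinearMap.ker_eq_bot']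
      intro a ha
      let i₀ : Fin n := ⟨0, by omega⟩
      obtain ⟨j, hj⟩ := exists_apply_notMem_of_card_mul_lt hβ {β i₀}
        (by simpa using hen : #{β i₀} * e < Fintype.card (Fin n))
      exact eq_zero_of_columnsEncode_eq_zero (projPoint_fst_mul_snd_ne (by simpa using hj))
        (congrFun ha j) (congrFun ha i₀)
    rw [LinearMap.finrank_range_of_inj hinj, Module.finrank_prod, finrank_self]
  · rintro _ ⟨a, rfl⟩ hc
    have ha : a ≠ 0 := by rintro rfl; exact hc (map_zero _)
    have := card_zeros_columnsEncode_projPoint_le hβ ha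
    have := card_zeros_add_hamWt (columnsEncode (projPoint ∘ β) a)
    omega

theorem hasLocality_range_columnsEncode_projPoint (hβ : ∀ p, #{i | β i = p} ≤ e)
    (hen : 2 * e < n) {r : ℕ} (hr : 2 ≤ r) :
    HasLocality (LinearMap.range (columnsEncode (projPoint ∘ β))) r := by
  intro i
  obtain ⟨j, hj⟩ := exists_apply_notMem_of_card_mul_lt hβ {β i}
    (by simp only [card_singleton, Fintype.card_fin]; omega : #{β i} * e < Fintype.card (Fin n))
  obtain ⟨k, hk⟩ := exists_apply_notMem_of_card_mul_lt hβ {β i, β j}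
    (by simpa using (Nat.mul_le_mul_right e card_le_two).trans_lt hen :
      #{β i, β j} * e < Fintype.card (Fin n))
  simp only [mem_singleton, mem_insert, not_or] at hj hk
  refine ⟨{j, k}, ?_, card_le_two.trans hr, ?_⟩
  · simp only [mem_insert, mem_singleton, not_or]
    exact ⟨fun h => hj (h ▸ rfl), fun h => hk.1 (h ▸ rfl)⟩
  · rintro _ ⟨a, rfl⟩ _ ⟨a', rfl⟩ hagree
    have hdiff : a - a' = 0 := by
      refine eq_zero_of_columnsEncode_eq_zero (projPoint_fst_mul_snd_ne (Ne.symm hk.2)) ?_ ?_ <;>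
        rw [map_sub, Pi.sub_apply, sub_eq_zero] <;> exact hagree _ (by simp)
    rw [sub_eq_zero.mp hdiff]

end ProjectiveLineCode

theorem exists_isCode_two_hasLocality {F : Type} [Field F] [Fintype F] {d r : ℕ}
    (hd : 2 ≤ d) (hr : 2 ≤ r) :
    ∃ C : Submodule F (Fin (d + ⌈(d : ℚ) / Fintype.card F⌉₊) → F),
      IsCode 2 d C ∧ HasLocality C r := by
  set q := Fintype.card F
  set e := ⌈(d : ℚ) / q⌉₊
  have hq : 2 ≤ q := Fintype.one_lt_card
  have hdqe : d ≤ q * e := (natCeil_div_le_iff_s11 (by omega)).mp le_rfl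
  have hed : e ≤ d - 1 := (natCeil_div_le_iff_s11 (by omega)).mpr <|
    calc d ≤ 2 * (d - 1) := by omega
      _ ≤ q * (d - 1) := Nat.mul_le_mul_right _ hq
  obtain ⟨β, hβ⟩ := exists_fiber_card_le (ι := Fin (d + e)) (P := Option F) (e := e)
    (by rw [Fintype.card_fin, Fintype.card_option]; nlinarith)
  refine ⟨_, ?_, hasLocality_range_columnsEncode_projPoint hβ (by omega) hr⟩
  simpa using isCode_range_columnsEncode_projPoint hβ (by omega)

theorem n_dim2_r_ge_2 (q d r : ℕ) (hq : IsPrimePow q) (hr : 2 ≤ r) (hd : 2 ≤ d) :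
    nLRC q 2 d r = d + ⌈(d : ℚ) / (q : ℚ)⌉₊ := by
  have hexists : LRCExists q (d + ⌈(d : ℚ) / (q : ℚ)⌉₊) 2 d r := by
    obtain ⟨field⟩ := Fintype.nonempty_field_iff.mpr
      (by rwa [Fintype.card_fin] : IsPrimePow (Fintype.card (Fin q)))
    have hC := exists_isCode_two_hasLocality (F := Fin q) hd hr
    rw [Fintype.card_fin] at hC
    exact ⟨Fin q, field, Nat.card_fin q, hC⟩
  refine le_antisymm (Nat.sInf_le hexists) (le_csInf ⟨_, hexists⟩ ?_)
  rintro n ⟨F, _, hF, C, hC, -⟩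
  have : Finite F := Nat.finite_of_card_ne_zero (by have := hq.two_le; omega)
  have := Fintype.ofFinite F
  simpa [← hF, Nat.card_eq_fintype_card] using hC.add_natCeil_div_le
end
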